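/- arXiv:1607.02483 — 9 statements merged into one kernel-verified Lean document; each statement's English description precedes it below -/
import Mathlib

section
/- For every nonnegative integer n, the sum over k from 0 to n of (-1)^(n-k) * C(n,k) * C(n+k,k) * H_{2k} equals 3*H_n - H_{⌊n/2⌋}, as an identity of rational numbers. -/
/-- The `n`-th harmonic number as a rational number. -/
def H (n : ℕ) : ℚ := ∑ j ∈ Finset.range n, 1 / ((j : ℚ) + 1)

/-!
Let `a(n, k) = (-1)^(n+k) C(n,k) C(n+k,k)` and `S(n) = ∑ₖ a(n, k) H_{2k}`. Zeilberger's
algorithm yields a certificate `G` with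
`(n+2) a(n+2,k) - a(n+1,k) - (n+1) a(n,k) = G(n,k+1) - G(n,k)`.
Multiplying by `H_{2k}`, summing over `k` and summing by parts turns the left side into
`(n+2) S(n+2) - S(n+1) - (n+1) S(n)` and the right side into
`∑ₖ (-1)^(n+k) k (4k-1) C(n+2,k) C(n+k,k) / ((n+1)(n+2))`; a second certificate shows that this
last sum is `4`. So `S` satisfies `(n+2) S(n+2) - S(n+1) - (n+1) S(n) = 4`, as does
`3 H_n - H_{⌊n/2⌋}` (check `n` even and odd separately), and the two agree at `n = 0, 1`.
-/

open Finset

/- Each identity below holds for every `k`, with a denominator that never vanishes, so rewriting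
with them turns the certificate identities into identities of rational functions in `n` and `k`,
with no separate treatment of the range `k > n`. -/
section Choose

variable {K : Type*} [Field K] [CharZero K]

lemma Nat.cast_choose_eq_succ_choose_mul_div (m k : ℕ) :
    (m.choose k : K) = (m + 1).choose k * ((m : K) + 1 - k) / (m + 1) := by
  rw [eq_div_iff (Nat.cast_add_one_ne_zero m)]
  rcases le_or_gt k (m + 1) with hk | hk
  · have h := congrArg (Nat.cast (R := K)) (Nat.choose_mul_succ_eq m k)
    push_cast [hk] at h
    exact h
  · simp [Nat.choose_eq_zero_of_lt hk, Nat.choose_eq_zero_of_lt (show m < k by omega)]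

lemma Nat.cast_choose_succ_right_eq_mul_div (m k : ℕ) :
    (m.choose (k + 1) : K) = m.choose k * ((m : K) - k) / (k + 1) := by
  rw [eq_div_iff (Nat.cast_add_one_ne_zero k)]
  rcases le_or_gt k m with hk | hk
  · have h := congrArg (Nat.cast (R := K)) (Nat.choose_succ_right_eq m k)
    push_cast [hk] at h
    exact h
  · simp [Nat.choose_eq_zero_of_lt hk, Nat.choose_eq_zero_of_lt (show m < k + 1 by omega)]

lemma Nat.cast_add_succ_choose_eq_mul_div (m k : ℕ) :
    ((m + 1 + k).choose k : K) = (m + k).choose k * ((m : K) + k + 1) / (m + 1) := by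
  rw [eq_div_iff (Nat.cast_add_one_ne_zero m)]
  have h := congrArg (Nat.cast (R := K)) (Nat.choose_mul_succ_eq (m + k) k)
  rw [show m + k + 1 - k = m + 1 by omega, show m + k + 1 = m + 1 + k by omega] at h
  push_cast at h
  linear_combination -h

lemma Nat.cast_add_succ_choose_succ_eq_mul_div (m k : ℕ) :
    ((m + (k + 1)).choose (k + 1) : K) = (m + k).choose k * ((m : K) + k + 1) / (k + 1) := by
  rw [eq_div_iff (Nat.cast_add_one_ne_zero k)]
  have h := congrArg (Nat.cast (R := K)) (Nat.add_one_mul_choose_eq (m + k) k)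
  push_cast at h
  linear_combination -h

end Choose

lemma sum_range_sub_mul_eq {R : Type*} [CommRing R] (f g : ℕ → R) (N : ℕ) :
    ∑ k ∈ range N, (f (k + 1) - f k) * g k =
      f N * g N - f 0 * g 0 - ∑ k ∈ range N, f (k + 1) * (g (k + 1) - g k) := by
  rw [← sum_range_sub (fun k => f k * g k), eq_sub_iff_add_eq, ← sum_add_distrib]
  exact sum_congr rfl fun k _ => by ring

lemma H_succ (m : ℕ) : H (m + 1) = H m + 1 / ((m : ℚ) + 1) := sum_range_succ _ m

def legendreCoeff (n k : ℕ) : ℚ := (-1) ^ (n + k) * n.choose k * (n + k).choose k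

def legendreCoeffCert (n k : ℕ) : ℚ :=
  (-1) ^ (n + k + 1) * (2 * k ^ 2 * (2 * k - 1)) * (n + 2).choose k * (n + k).choose k /
    ((n + 1) * (n + 2))

lemma legendreCoeff_recurrence (n k : ℕ) :
    (n + 2) * legendreCoeff (n + 2) k - legendreCoeff (n + 1) k - (n + 1) * legendreCoeff n k =
      legendreCoeffCert n (k + 1) - legendreCoeffCert n k := by
  unfold legendreCoeff legendreCoeffCert
  rw [Nat.cast_choose_eq_succ_choose_mul_div n k, Nat.cast_choose_eq_succ_choose_mul_div (n + 1) k,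
    Nat.cast_choose_succ_right_eq_mul_div, Nat.cast_add_succ_choose_succ_eq_mul_div,
    Nat.cast_add_succ_choose_eq_mul_div (n + 1) k, Nat.cast_add_succ_choose_eq_mul_div n k]
  field_simp
  push_cast
  ring

def byPartsCoeff (n k : ℕ) : ℚ :=
  (-1) ^ (n + k) * (k * (4 * k - 1)) * (n + 2).choose k * (n + k).choose k

def byPartsCoeffCert (n k : ℕ) : ℚ :=
  (-1) ^ (n + k) * (2 * k ^ 2 * (k - 1) * ((4 * (n + 2) ^ 2 - 3) * k - (5 * (n + 2) ^ 2 - 3))) *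
    (n + 3).choose k * (n + k).choose k / ((n + 1) * (n + 2) * (n + 3))

lemma byPartsCoeff_recurrence (n k : ℕ) :
    (n + 1) * byPartsCoeff (n + 1) k - (n + 3) * byPartsCoeff n k =
      byPartsCoeffCert n (k + 1) - byPartsCoeffCert n k := by
  unfold byPartsCoeff byPartsCoeffCert
  rw [Nat.cast_choose_eq_succ_choose_mul_div (n + 2) k, Nat.cast_choose_succ_right_eq_mul_div,
    Nat.cast_add_succ_choose_succ_eq_mul_div, Nat.cast_add_succ_choose_eq_mul_div n k]
  field_simp
  push_cast
  ring

lemma legendreCoeff_eq_zero {n k : ℕ} (h : n < k) : legendreCoeff n k = 0 := by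
  simp [legendreCoeff, Nat.choose_eq_zero_of_lt h]

lemma legendreCoeffCert_eq_zero {n k : ℕ} (h : n + 2 < k) : legendreCoeffCert n k = 0 := by
  simp [legendreCoeffCert, Nat.choose_eq_zero_of_lt h]

lemma byPartsCoeff_eq_zero {n k : ℕ} (h : n + 2 < k) : byPartsCoeff n k = 0 := by
  simp [byPartsCoeff, Nat.choose_eq_zero_of_lt h]

lemma byPartsCoeffCert_eq_zero {n k : ℕ} (h : n + 3 < k) : byPartsCoeffCert n k = 0 := by
  simp [byPartsCoeffCert, Nat.choose_eq_zero_of_lt h]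

lemma sum_byPartsCoeff (n : ℕ) :
    ∑ k ∈ range (n + 4), byPartsCoeff n k = 4 * (n + 1) * (n + 2) := by
  induction n with
  | zero => norm_num [byPartsCoeff, sum_range_succ]
  | succ n ih =>
    have htele : ∑ k ∈ range (n + 5),
        ((n + 1) * byPartsCoeff (n + 1) k - (n + 3) * byPartsCoeff n k) = 0 := by
      rw [sum_congr rfl fun k _ => byPartsCoeff_recurrence n k, sum_range_sub,
        byPartsCoeffCert_eq_zero (by omega : n + 3 < n + 5)]
      simp [byPartsCoeffCert]
    have hvanish : ∀ k ≥ n + 3, byPartsCoeff n k = 0 := fun k hk => byPartsCoeff_eq_zero hk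
    rw [sum_sub_distrib, ← mul_sum, ← mul_sum, eventually_constant_sum hvanish (by omega),
      ← eventually_constant_sum hvanish (by omega : n + 3 ≤ n + 4), ih, sub_eq_zero] at htele
    apply mul_left_cancel₀ (Nat.cast_add_one_ne_zero n)
    push_cast
    linear_combination htele

lemma legendreCoeffCert_succ_mul_H_sub (n k : ℕ) :
    legendreCoeffCert n (k + 1) * (H (2 * (k + 1)) - H (2 * k)) =
      -(byPartsCoeff n (k + 1) / ((n + 1) * (n + 2))) := by
  rw [mul_add_one, H_succ, H_succ]
  unfold legendreCoeffCert byPartsCoeff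
  have : (2 * (k : ℚ) + 1) ≠ 0 := by positivity
  field_simp
  push_cast
  ring

def legendreHarmonicSum (n : ℕ) : ℚ := ∑ k ∈ range (n + 1), legendreCoeff n k * H (2 * k)

lemma legendreHarmonicSum_eq_sum_range {n N : ℕ} (h : n < N) :
    legendreHarmonicSum n = ∑ k ∈ range N, legendreCoeff n k * H (2 * k) :=
  (eventually_constant_sum (fun k hk => by rw [legendreCoeff_eq_zero hk, zero_mul]) h).symm

lemma legendreHarmonicSum_recurrence (n : ℕ) :
    (n + 2) * legendreHarmonicSum (n + 2) - legendreHarmonicSum (n + 1) -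
      (n + 1) * legendreHarmonicSum n = 4 := by
  rw [legendreHarmonicSum_eq_sum_range (by omega : n + 2 < n + 3),
    legendreHarmonicSum_eq_sum_range (by omega : n + 1 < n + 3),
    legendreHarmonicSum_eq_sum_range (by omega : n < n + 3), mul_sum, mul_sum,
    ← sum_sub_distrib, ← sum_sub_distrib]
  have hsummand : ∀ k ∈ range (n + 3), (n + 2) * (legendreCoeff (n + 2) k * H (2 * k)) -
      legendreCoeff (n + 1) k * H (2 * k) - (n + 1) * (legendreCoeff n k * H (2 * k)) =
      (legendreCoeffCert n (k + 1) - legendreCoeffCert n k) * H (2 * k) := fun k _ => by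
    rw [← legendreCoeff_recurrence]; ring
  rw [sum_congr rfl hsummand, sum_range_sub_mul_eq,
    legendreCoeffCert_eq_zero (by omega : n + 2 < n + 3)]
  simp only [legendreCoeffCert_succ_mul_H_sub, sum_neg_distrib, ← sum_div]
  have hshift : ∑ k ∈ range (n + 3), byPartsCoeff n (k + 1) = 4 * (n + 1) * (n + 2) := by
    rw [← sum_byPartsCoeff, sum_range_succ' _ (n + 3)]
    simp [byPartsCoeff]
  have hG0 : legendreCoeffCert n 0 = 0 := by simp [legendreCoeffCert]
  rw [hshift, hG0]
  field_simp
  ring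

lemma three_H_sub_H_half_recurrence (n : ℕ) :
    (n + 2) * (3 * H (n + 2) - H ((n + 2) / 2)) - (3 * H (n + 1) - H ((n + 1) / 2)) -
      (n + 1) * (3 * H n - H (n / 2)) = 4 := by
  rcases Nat.even_or_odd' n with ⟨t, rfl | rfl⟩
  · rw [show (2 * t + 2) / 2 = t + 1 by omega, show (2 * t + 1) / 2 = t by omega,
      show 2 * t / 2 = t by omega, show 2 * t + 2 = 2 * t + 1 + 1 from rfl, H_succ, H_succ, H_succ]
    have : (2 * (t : ℚ) + 1) ≠ 0 := by positivity
    push_cast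
    field_simp
    ring
  · rw [show (2 * t + 1 + 2) / 2 = t + 1 by omega, show (2 * t + 1 + 1) / 2 = t + 1 by omega,
      show (2 * t + 1) / 2 = t by omega, show 2 * t + 1 + 2 = 2 * t + 1 + 1 + 1 from rfl,
      H_succ (2 * t + 1 + 1), H_succ (2 * t + 1), H_succ t]
    have : (2 * (t : ℚ) + 3) ≠ 0 := by positivity
    push_cast
    field_simp
    ring

lemma legendreHarmonicSum_eq (n : ℕ) : legendreHarmonicSum n = 3 * H n - H (n / 2) := by
  induction n using Nat.twoStepInduction with
  | zero => simp [legendreHarmonicSum, legendreCoeff, H]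
  | one => norm_num [legendreHarmonicSum, legendreCoeff, H, sum_range_succ]
  | more n ih0 ih1 =>
    apply mul_left_cancel₀ (show (n : ℚ) + 2 ≠ 0 by positivity)
    linear_combination legendreHarmonicSum_recurrence n - three_H_sub_H_half_recurrence n + ih1 +
      (n + 1 : ℚ) * ih0

theorem stmt_2 (n : ℕ) :
    ∑ k ∈ Finset.range (n + 1),
        (-1 : ℚ)^(n - k) * (n.choose k) * ((n + k).choose k) * H (2 * k) =
      3 * H n - H (n / 2) := by
  rw [← legendreHarmonicSum_eq]
  refine sum_congr rfl fun k hk => ?_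
  have hsign : (-1 : ℚ) ^ (n + k) = (-1) ^ (n - k) := by
    rw [show n + k = n - k + 2 * k by have := mem_range.1 hk; omega, pow_add, pow_mul, neg_one_sq,
      one_pow, mul_one]
  rw [legendreCoeff, hsign]
end

section
/- For every positive integer n, the sum over k from 0 to n-1 of (-1)^(n-k)/(2k+1) * C(n-1,k) * C(n+k,k) * n equals -1 if n is odd and 0 if n is even. -/
/-!
Since `n C(n-1,k) C(n+k,k) = (2k+1) C(n+k,2k+1) C(2k,k)`, the sum equals
`A(n) = ∑_{k<n} (-1)^(n-k) C(n+k,2k+1) C(2k,k)`. Pascal's rule in the upper index gives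
`A(n+1) = -B(n) - A(n)` with `B(n) = ∑_{k≤n} (-1)^(n-k) C(n,k) C(n+k,k)`, and `B(n) = 1` because it
is the `n`-th forward difference of `x ↦ C(x,n)` at `x = n`. Together with `A(0) = 0` this gives
`A(n) = -1` for odd `n` and `A(n) = 0` for even `n`.
-/

open Finset

namespace Nat

theorem sum_range_neg_one_pow_mul_choose_mul_add_choose (n : ℕ) :
    ∑ k ∈ range (n + 1), (-1 : ℤ) ^ (n - k) * (n.choose k * (n + k).choose k) = 1 := by
  have h := fwdDiff_iter_eq_sum_shift 1 (fun x ↦ (x.choose n : ℤ)) n n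
  have hΔ : (fwdDiff 1)^[n] (fun x ↦ (x.choose n : ℤ)) = fun _ ↦ 1 := by
    simpa using fwdDiff_iter_choose 0 n
  rw [hΔ] at h
  simpa [add_comm n, choose_symm_add, mul_assoc] using h.symm

theorem choose_mul_choose_two_mul (n k : ℕ) :
    (n + k).choose (2 * k) * (2 * k).choose k = n.choose k * (n + k).choose k := by
  rw [choose_mul (by omega), show n + k - k = n by omega, show 2 * k - k = k by omega, mul_comm]

theorem mul_choose_pred_mul_add_choose (n k : ℕ) :
    n * (n - 1).choose k * (n + k).choose k =
      (2 * k + 1) * (n + k).choose (2 * k + 1) * (2 * k).choose k := by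
  cases n with
  | zero => simp [choose_eq_zero_of_lt (show k < 2 * k + 1 by omega)]
  | succ n =>
    calc (n + 1) * (n + 1 - 1).choose k * (n + 1 + k).choose k
        = (n + 1).choose k * (n + 1 - k) * (n + 1 + k).choose k := by
          rw [add_tsub_cancel_right, mul_comm (n + 1), choose_mul_succ_eq]
      _ = (n + 1 + k).choose (2 * k) * (n + 1 + k - 2 * k) * (2 * k).choose k := by
          rw [show n + 1 + k - 2 * k = n + 1 - k by omega,
            mul_right_comm ((n + 1 + k).choose (2 * k)) (n + 1 - k), choose_mul_choose_two_mul,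
            mul_right_comm]
      _ = (2 * k + 1) * (n + 1 + k).choose (2 * k + 1) * (2 * k).choose k := by
          rw [← choose_succ_right_eq, mul_comm (2 * k + 1)]

theorem sum_range_neg_one_pow_mul_choose_two_mul_add_one_mul_choose (n : ℕ) :
    ∑ k ∈ range n, (-1 : ℤ) ^ (n - k) * ((n + k).choose (2 * k + 1) * (2 * k).choose k) =
      if Odd n then -1 else 0 := by
  induction n with
  | zero => simp
  | succ n ih =>
    have pascal : ∀ k ∈ range (n + 1),
        (-1 : ℤ) ^ (n + 1 - k) * ((n + 1 + k).choose (2 * k + 1) * (2 * k).choose k) =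
          -((-1) ^ (n - k) * (n.choose k * (n + k).choose k)) -
            (-1) ^ (n - k) * ((n + k).choose (2 * k + 1) * (2 * k).choose k) := by
      intro k hk
      have h := congrArg (Nat.cast : ℕ → ℤ) (choose_mul_choose_two_mul n k)
      push_cast at h
      rw [Nat.sub_add_comm (mem_range_succ_iff.mp hk), pow_succ, add_right_comm,
        choose_succ_succ']
      push_cast
      linear_combination (-(-1 : ℤ) ^ (n - k)) * h
    rw [sum_congr rfl pascal, sum_sub_distrib, sum_neg_distrib,
      sum_range_neg_one_pow_mul_choose_mul_add_choose, sum_range_succ,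
      choose_eq_zero_of_lt (by omega : n + n < 2 * n + 1), ih]
    by_cases h : Odd n <;> simp [h, odd_add_one]

end Nat

theorem stmt_3_general (n : ℕ) :
    ∑ k ∈ Finset.range n,
        (-1 : ℚ)^(n - k) / (2 * (k : ℚ) + 1) * ((n - 1).choose k) *
          ((n + k).choose k) * (n : ℚ) =
      if Odd n then -1 else 0 := by
  have hterm (k : ℕ) : (-1 : ℚ)^(n - k) / (2 * (k : ℚ) + 1) * ((n - 1).choose k) *
      ((n + k).choose k) * (n : ℚ) =
        (-1) ^ (n - k) * ((n + k).choose (2 * k + 1) * (2 * k).choose k) := by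
    have h := congrArg (Nat.cast : ℕ → ℚ) (Nat.mul_choose_pred_mul_add_choose n k)
    push_cast at h
    field_simp
    linear_combination h
  simp_rw [hterm]
  exact_mod_cast Nat.sum_range_neg_one_pow_mul_choose_two_mul_add_one_mul_choose n

theorem stmt_3 (n : ℕ) (hn : 0 < n) :
    ∑ k ∈ Finset.range n,
        (-1 : ℚ)^(n - k) / (2 * (k : ℚ) + 1) * ((n - 1).choose k) *
          ((n + k).choose k) * (n : ℚ) =
      if Odd n then -1 else 0 :=
  stmt_3_general n
end

section
/- Let p > 2 be a prime, let i and j be nonnegative integers, and let r be an integer with 0 < r < p. Then C((i+j)p, r+ip) is congruent modulo p^3 (as rational numbers) to C(i+j, i) * C(p, r) * j * (1 - p*((i+j-1)*H_{r-1} + i/r)). -/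
open Nat Finset


/-- descending product in ℤ -/
lemma aux_desc (m : ℕ) : ∀ s : ℕ, s ≤ m →
    (∏ k ∈ range s, ((m : ℤ) - k)) * ((m - s)! : ℕ) = (m ! : ℕ) := by
  intro s
  induction s with
  | zero => simp
  | succ s ih =>
    intro hs
    rw [prod_range_succ, mul_assoc]
    have h1 : m - s = (m - (s+1)) + 1 := by omega
    have h2 : ((m : ℤ) - s) * ((m - (s+1))! : ℕ) = ((m - s)! : ℕ) := by
      rw [h1, Nat.factorial_succ]
      push_cast
      have : (m : ℤ) - s = ((m - (s+1) : ℕ) : ℤ) + 1 := by omega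
      rw [this]
    rw [h2, ih (by omega)]

/-- generic product expansion mod x^2 -/
lemma expandF (f : ℕ → ℤ) (x : ℤ) (S : Finset ℕ) :
    (∏ k ∈ S, (x + f k)) ≡ (∏ k ∈ S, f k) + x * ∑ k ∈ S, ∏ k' ∈ S.erase k, f k' [ZMOD x^2] := by
  classical
  induction S using Finset.induction_on with
  | empty => simp
  | @insert a S ha ih =>
    rw [prod_insert ha, prod_insert ha, sum_insert ha, erase_insert ha]
    have h1 : (x + f a) * (∏ k ∈ S, (x + f k)) ≡
        (x + f a) * ((∏ k ∈ S, f k) + x * ∑ k ∈ S, ∏ k' ∈ S.erase k, f k') [ZMOD x^2] :=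
      ih.mul_left _
    refine h1.trans (Int.ModEq.symm (Int.modEq_iff_dvd.mpr ?_))
    have herase : ∀ k ∈ S, ∏ k' ∈ (insert a S).erase k, f k' = f a * ∏ k' ∈ S.erase k, f k' := by
      intro k hk
      rw [Finset.erase_insert_of_ne (by rintro rfl; exact ha hk), prod_insert (by simp [ha])]
    rw [Finset.sum_congr rfl herase, ← Finset.mul_sum]
    refine ⟨∑ k ∈ S, ∏ k' ∈ S.erase k, f k', by ring⟩

/-- integer version of s! * H s -/
def Gz (s : ℕ) : ℤ := ∑ k ∈ range s, ∏ k' ∈ (range s).erase k, ((k' : ℤ) + 1)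

lemma Gz_mul (s : ℕ) {k : ℕ} (hk : k ∈ range s) :
    ((k : ℤ) + 1) * ∏ k' ∈ (range s).erase k, ((k' : ℤ) + 1) = (s ! : ℕ) := by
  have := Finset.mul_prod_erase (range s) (fun k' => ((k' : ℤ) + 1)) hk
  rw [this]
  exact_mod_cast Finset.prod_range_add_one_eq_factorial s

lemma Gz_cast (s : ℕ) : ((Gz s : ℤ) : ℚ) = (s ! : ℕ) * H s := by
  rw [Gz, H]
  push_cast
  rw [Finset.mul_sum]
  apply Finset.sum_congr rfl
  intro k hk
  have h' : ((k:ℚ)+1) * ∏ k' ∈ (range s).erase k, ((k':ℚ)+1) = (s ! : ℕ) := by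
    exact_mod_cast Gz_mul s hk
  have hk1 : ((k:ℚ)+1) ≠ 0 := by positivity
  field_simp
  linear_combination h'

lemma Gz_rec (r : ℕ) (hr : 0 < r) : Gz r = r * Gz (r-1) + ((r-1)! : ℕ) := by
  obtain ⟨s, rfl⟩ : ∃ s, r = s + 1 := ⟨r-1, by omega⟩
  simp only [Nat.add_sub_cancel]
  have hs1 : ((s:ℚ)+1) ≠ 0 := by positivity
  have h : ((Gz (s+1) : ℤ) : ℚ) = ((((s:ℕ)+1 : ℕ) * Gz s + ((s)! : ℕ) : ℤ) : ℚ) := by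
    rw [Int.cast_add, Int.cast_mul, Gz_cast, Gz_cast]
    rw [H, Finset.sum_range_succ, ← H, Nat.factorial_succ]
    push_cast
    field_simp
  exact_mod_cast h

/-- expansion of ∏ (x + k + 1) over range s, mod x^2 -/
lemma expandE (x : ℤ) (s : ℕ) :
    (∏ k ∈ range s, (x + ((k : ℤ) + 1))) ≡ (s ! : ℕ) + x * Gz s [ZMOD x^2] := by
  have := expandF (fun k => (k : ℤ) + 1) x (range s)
  have hp : (∏ k ∈ range s, ((k : ℤ) + 1)) = (s ! : ℕ) := by
    exact_mod_cast Finset.prod_range_add_one_eq_factorial s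
  rwa [hp] at this


lemma aux_asc (m : ℕ) : ∀ s : ℕ, m ! * ∏ k ∈ range s, (m + (k + 1)) = (m + s)! := by
  intro s
  induction s with
  | zero => simp
  | succ s ih =>
    rw [prod_range_succ, ← mul_assoc, ih]
    show (m+s)! * (m + (s + 1)) = (m + (s+1))!
    rw [← Nat.add_assoc, Nat.factorial_succ]; ring

lemma filter_dvd_prod {M : Type*} [CommMonoid M] (g : ℕ → M) (i p : ℕ) (hp : 0 < p) :
    ∏ k ∈ (range (i*p)).filter (fun k => p ∣ (k+1)), g (k+1) = ∏ s ∈ range i, g ((s+1)*p) := by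
  have key : ∀ k, k ∈ (range (i*p)).filter (fun k => p ∣ (k+1)) →
      1 ≤ (k+1)/p ∧ (k+1)/p ≤ i ∧ p * ((k+1)/p) = k + 1 := by
    intro k hk
    simp only [mem_filter, mem_range] at hk
    obtain ⟨hk1, hk2⟩ := hk
    have ht : p * ((k+1)/p) = k + 1 := Nat.mul_div_cancel' hk2
    have h1 : 1 ≤ (k+1)/p := Nat.pos_of_ne_zero (fun h => by simp [h] at ht)
    have h2 : (k+1)/p ≤ i := by
      refine Nat.le_of_mul_le_mul_left ?_ hp
      rw [ht]
      calc k + 1 ≤ i * p := by omega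
        _ = p * i := by ring
    exact ⟨h1, h2, ht⟩
  apply Finset.prod_bij' (i := fun k _ => (k+1)/p - 1) (j := fun s _ => (s+1)*p - 1)
  · intro k hk
    obtain ⟨h1, h2, ht⟩ := key k hk
    simp only [mem_range]; omega
  · intro s hs
    simp only [mem_range] at hs
    have h1 : (s+1)*p ≤ i*p := Nat.mul_le_mul_right p (by omega)
    have h2 : 0 < (s+1)*p := Nat.mul_pos (by omega) hp
    simp only [mem_filter, mem_range]
    refine ⟨by omega, ?_⟩
    have h3 : (s+1)*p - 1 + 1 = (s+1)*p := by omega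
    rw [h3]; exact dvd_mul_left p (s+1)
  · intro k hk
    obtain ⟨h1, h2, ht⟩ := key k hk
    have h3 : ((k+1)/p - 1 + 1) = (k+1)/p := by omega
    rw [h3, mul_comm]
    omega
  · intro s hs
    have h2 : 0 < (s+1)*p := Nat.mul_pos (by omega) hp
    have h3 : (s+1)*p - 1 + 1 = (s+1)*p := by omega
    rw [h3, Nat.mul_div_cancel _ hp]
    omega
  · intro k hk
    obtain ⟨h1, h2, ht⟩ := key k hk
    congr 1
    have h3 : ((k+1)/p - 1 + 1) = (k+1)/p := by omega
    rw [h3, mul_comm]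
    omega


lemma w_id (p : ℕ) (hp : 0 < p) (i j : ℕ) :
    (((i+j)*p).choose (i*p)) * ∏ k ∈ (range (i*p)).filter (fun k => ¬ p ∣ (k+1)), (k+1)
    = ((i+j).choose i) * ∏ k ∈ (range (i*p)).filter (fun k => ¬ p ∣ (k+1)), (j*p + (k+1)) := by
  -- notation
  set Pn0 : ℕ := ∏ k ∈ (range (i*p)).filter (fun k => ¬ p ∣ (k+1)), (k+1) with hPn0
  set Pn : ℕ := ∏ k ∈ (range (i*p)).filter (fun k => ¬ p ∣ (k+1)), (j*p + (k+1)) with hPn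
  -- h1 : choose identity for big
  have hip : i*p ≤ (i+j)*p := Nat.mul_le_mul_right p (by omega)
  have hsub : (i+j)*p - i*p = j*p := by rw [Nat.add_mul]; omega
  have h1 : (((i+j)*p).choose (i*p)) * (i*p)! * (j*p)! = ((i+j)*p)! := by
    have := Nat.choose_mul_factorial_mul_factorial hip
    rwa [hsub] at this
  -- h2 : (jp)! * ∏_{k<ip} (jp + (k+1)) = ((i+j)p)!
  have h2 : (j*p)! * ∏ k ∈ range (i*p), (j*p + (k+1)) = ((i+j)*p)! := by
    have := aux_asc (j*p) (i*p)
    have he : j*p + i*p = (i+j)*p := by ring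
    rwa [he] at this
  -- split
  have h2' : ∏ k ∈ range (i*p), (j*p + (k+1)) =
      (∏ k ∈ (range (i*p)).filter (fun k => p ∣ (k+1)), (j*p + (k+1))) * Pn :=
    (Finset.prod_filter_mul_prod_filter_not (range (i*p)) (fun k => p ∣ (k+1)) _).symm
  -- h3 : dvd part
  have h3 : (∏ k ∈ (range (i*p)).filter (fun k => p ∣ (k+1)), (j*p + (k+1)))
      = (∏ s ∈ range i, (j + (s+1))) * p^i := by
    rw [filter_dvd_prod (fun x => j*p + x) i p hp]
    calc ∏ s ∈ range i, (j*p + (s+1)*p) = ∏ s ∈ range i, ((j + (s+1)) * p) :=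
          prod_congr rfl (fun s _ => by ring)
      _ = (∏ s ∈ range i, (j+(s+1))) * p^i := by
          rw [Finset.prod_mul_distrib, Finset.prod_const, card_range]
  -- h4
  have h4 : j ! * ∏ s ∈ range i, (j + (s+1)) = (j+i)! := aux_asc j i
  -- h5 : (ip)! decomposition
  have h5 : ((i*p)! : ℕ) = p^i * i ! * Pn0 := by
    have e0 : ∏ k ∈ range (i*p), (k+1) = (i*p)! := Finset.prod_range_add_one_eq_factorial (i*p)
    have e1 : ∏ k ∈ range (i*p), (k+1) =
        (∏ k ∈ (range (i*p)).filter (fun k => p ∣ (k+1)), (k+1)) * Pn0 :=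
      (Finset.prod_filter_mul_prod_filter_not (range (i*p)) (fun k => p ∣ (k+1)) _).symm
    have e2 : (∏ k ∈ (range (i*p)).filter (fun k => p ∣ (k+1)), (k+1)) = p^i * i ! := by
      rw [filter_dvd_prod (fun x => x) i p hp]
      calc ∏ s ∈ range i, ((s+1) * p) = (∏ s ∈ range i, (s+1)) * p^i := by
            rw [Finset.prod_mul_distrib, Finset.prod_const, card_range]
        _ = p^i * i ! := by rw [Finset.prod_range_add_one_eq_factorial]; ring
    rw [← e0, e1, e2]
  -- h6 : small choose identity
  have h6 : ((i+j).choose i) * i ! * j ! = (i+j)! := by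
    have := Nat.choose_mul_factorial_mul_factorial (show i ≤ i + j by omega)
    rwa [show i + j - i = j by omega] at this
  -- now cast to ℚ and combine
  have hc0 : ((p:ℚ)^i * (i ! : ℚ) * (j ! : ℚ) * ((j*p)! : ℚ)) ≠ 0 := by positivity
  have key : ((((i+j)*p).choose (i*p) : ℚ) * Pn0) * ((p:ℚ)^i * i ! * j ! * ((j*p)! : ℚ))
      = (((i+j).choose i : ℚ) * Pn) * ((p:ℚ)^i * i ! * j ! * ((j*p)! : ℚ)) := by
    have q1 : ((((i+j)*p).choose (i*p) : ℚ)) * ((i*p)! : ℚ) * ((j*p)! : ℚ) = (((i+j)*p)! : ℚ) := by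
      exact_mod_cast congrArg (Nat.cast (R := ℚ)) h1
    have q2 : ((j*p)! : ℚ) * (((∏ k ∈ (range (i*p)).filter (fun k => p ∣ (k+1)), (j*p + (k+1)) : ℕ)) * (Pn:ℚ)) = (((i+j)*p)! : ℚ) := by
      have n2 : (j*p)! * ((∏ k ∈ (range (i*p)).filter (fun k => p ∣ (k+1)), (j*p + (k+1))) * Pn) = ((i+j)*p)! := by
        rw [← h2']; exact h2
      exact_mod_cast congrArg (Nat.cast (R := ℚ)) n2
    have q3 : ((∏ k ∈ (range (i*p)).filter (fun k => p ∣ (k+1)), (j*p + (k+1)) : ℕ) : ℚ)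
        = ((∏ s ∈ range i, (j + (s+1)) : ℕ) : ℚ) * (p:ℚ)^i := by exact_mod_cast congrArg (Nat.cast (R := ℚ)) h3
    have q4 : (j ! : ℚ) * ((∏ s ∈ range i, (j + (s+1)) : ℕ) : ℚ) = ((j+i)! : ℚ) := by
      exact_mod_cast congrArg (Nat.cast (R := ℚ)) h4
    have q5 : ((i*p)! : ℚ) = (p:ℚ)^i * (i ! : ℚ) * (Pn0 : ℚ) := by
      exact_mod_cast congrArg (Nat.cast (R := ℚ)) h5
    have q6 : (((i+j).choose i : ℕ) : ℚ) * (i ! : ℚ) * (j ! : ℚ) = ((j+i)! : ℚ) := by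
      rw [show j + i = i + j by omega]
      exact_mod_cast congrArg (Nat.cast (R := ℚ)) h6
    set Cnp := ((((i+j)*p).choose (i*p) : ℕ) : ℚ)
    set Cn := (((i+j).choose i : ℕ) : ℚ)
    set Pd := ((∏ k ∈ (range (i*p)).filter (fun k => p ∣ (k+1)), (j*p + (k+1)) : ℕ) : ℚ)
    set Aj := ((∏ s ∈ range i, (j + (s+1)) : ℕ) : ℚ)
    linear_combination (-(Cnp * (j ! : ℚ) * ((j*p)! : ℚ))) * q5 + (j ! : ℚ) * q1 - (j ! : ℚ) * q2
      + ((j*p)! : ℚ) * (Pn : ℚ) * (j ! : ℚ) * q3 + ((j*p)! : ℚ) * (p:ℚ)^i * (Pn:ℚ) * q4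
      - ((j*p)! : ℚ) * (p:ℚ)^i * (Pn:ℚ) * q6
  have := mul_right_cancel₀ hc0 key
  exact_mod_cast this


lemma sum_univ_zmod (p : ℕ) (hp : p.Prime) (hp2 : 2 < p) [NeZero p] : ∑ x : ZMod p, x = 0 := by
  haveI : Fact p.Prime := ⟨hp⟩
  have hneg : ∑ x : ZMod p, x = ∑ x : ZMod p, (-x) :=
    Fintype.sum_bijective Neg.neg neg_involutive.bijective _ _ (fun x => (neg_neg x).symm)
  have h2 : (2 : ZMod p) * ∑ x : ZMod p, x = 0 := by
    rw [two_mul]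
    nth_rewrite 2 [hneg]
    rw [← Finset.sum_add_distrib]
    simp
  have h2ne : (2 : ZMod p) ≠ 0 := by
    have : ((2:ℕ) : ZMod p) ≠ 0 := by
      rw [Ne, ZMod.natCast_eq_zero_iff]
      intro h
      have := Nat.le_of_dvd (by norm_num) h
      omega
    exact_mod_cast this
  rcases mul_eq_zero.mp h2 with h | h
  · exact absurd h h2ne
  · exact h

lemma sum_inv_zmod (p : ℕ) (hp : p.Prime) (hp2 : 2 < p) :
    ∑ a ∈ range p, (((a : ZMod p)+1))⁻¹ = 0 := by
  haveI : Fact p.Prime := ⟨hp⟩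
  haveI : NeZero p := ⟨hp.pos.ne'⟩
  have step1 : ∑ a ∈ range p, (((a : ZMod p)+1))⁻¹ = ∑ x : ZMod p, x⁻¹ := by
    refine Finset.sum_nbij' (fun a => ((a : ZMod p)+1)) (fun x => (x - 1).val) ?_ ?_ ?_ ?_ ?_
    · intro a _; exact Finset.mem_univ _
    · intro x _; exact Finset.mem_range.mpr (ZMod.val_lt _)
    · intro a ha
      simp only [add_sub_cancel_right]
      exact ZMod.val_cast_of_lt (Finset.mem_range.mp ha)
    · intro x _
      show (((x - 1).val : ℕ) : ZMod p) + 1 = x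
      have h := ZMod.natCast_rightInverse (n := p) (x - 1)
      rw [h]; ring
    · intro a _; rfl
  rw [step1]
  have step2 : ∑ x : ZMod p, x⁻¹ = ∑ x : ZMod p, x :=
    Fintype.sum_bijective Inv.inv inv_involutive.bijective _ (fun x => x) (fun x => rfl)
  rw [step2]
  exact sum_univ_zmod p hp hp2

lemma period_sum (p : ℕ) [NeZero p] (i : ℕ) :
    ∑ k ∈ range (i*p), (((k : ZMod p)+1))⁻¹ = i * ∑ a ∈ range p, (((a : ZMod p)+1))⁻¹ := by
  induction i with
  | zero => simp
  | succ i ih =>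
    rw [show (i+1)*p = i*p + p by ring, Finset.sum_range_add, ih]
    have : ∀ x ∈ range p, (((i*p + x : ℕ) : ZMod p) + 1)⁻¹ = ((x : ZMod p) + 1)⁻¹ := by
      intro x _
      congr 2
      push_cast
      rw [ZMod.natCast_self]
      ring
    rw [Finset.sum_congr rfl this]
    push_cast
    ring

lemma w3 (p : ℕ) (hp : p.Prime) (hp2 : 2 < p) (i : ℕ) :
    (p : ℤ) ∣ ∑ k ∈ (range (i*p)).filter (fun k => ¬ p ∣ (k+1)),
      ∏ k' ∈ ((range (i*p)).filter (fun k => ¬ p ∣ (k+1))).erase k, ((k' : ℤ) + 1) := by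
  haveI : Fact p.Prime := ⟨hp⟩
  haveI : NeZero p := ⟨hp.pos.ne'⟩
  set S := (range (i*p)).filter (fun k => ¬ p ∣ (k+1)) with hS
  rw [← ZMod.intCast_zmod_eq_zero_iff_dvd]
  push_cast
  have hne : ∀ k ∈ S, ((k : ZMod p)+1) ≠ 0 := by
    intro k hk
    simp only [hS, mem_filter, mem_range] at hk
    intro h
    apply hk.2
    have : ((k+1 : ℕ) : ZMod p) = 0 := by push_cast; exact h
    exact (ZMod.natCast_eq_zero_iff _ _).mp this
  have step1 : ∀ k ∈ S, ∏ k' ∈ S.erase k, ((k' : ZMod p) + 1)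
      = (∏ k' ∈ S, ((k' : ZMod p) + 1)) * ((k : ZMod p)+1)⁻¹ := by
    intro k hk
    have h := Finset.mul_prod_erase S (fun k' => ((k' : ZMod p) + 1)) hk
    rw [← h, mul_comm ((k:ZMod p)+1) _, mul_assoc, mul_inv_cancel₀ (hne k hk), mul_one]
  rw [Finset.sum_congr rfl step1, ← Finset.mul_sum]
  have step2 : ∑ k ∈ S, ((k : ZMod p)+1)⁻¹ = 0 := by
    have hsplit := Finset.sum_filter_add_sum_filter_not (range (i*p)) (fun k => ¬ p ∣ (k+1))
      (fun k => ((k : ZMod p)+1)⁻¹)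
    have hz : ∑ k ∈ (range (i*p)).filter (fun k => ¬¬ p ∣ (k+1)), ((k : ZMod p)+1)⁻¹ = 0 := by
      apply Finset.sum_eq_zero
      intro k hk
      simp only [mem_filter, not_not] at hk
      have : ((k+1 : ℕ) : ZMod p) = 0 := (ZMod.natCast_eq_zero_iff _ _).mpr hk.2
      push_cast at this
      rw [this, inv_zero]
    have heq : ∑ k ∈ S, ((k : ZMod p)+1)⁻¹ = ∑ k ∈ range (i*p), ((k : ZMod p)+1)⁻¹ := by
      rw [← hsplit, hz, add_zero]
    rw [heq, period_sum p i, sum_inv_zmod p hp hp2, mul_zero]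
  rw [step2, mul_zero]


lemma wolst (p : ℕ) (hp : p.Prime) (hp2 : 2 < p) (i j : ℕ) :
    ((((i+j)*p).choose (i*p) : ℕ) : ℤ) ≡ (((i+j).choose i : ℕ) : ℤ) [ZMOD (p:ℤ)^2] := by
  set S := (range (i*p)).filter (fun k => ¬ p ∣ (k+1)) with hS
  set Pn0 : ℤ := ∏ k ∈ S, ((k:ℤ)+1) with hPn0
  set Pn : ℤ := ∏ k ∈ S, ((j*p:ℤ) + ((k:ℤ)+1)) with hPn
  have hid : ((((i+j)*p).choose (i*p) : ℕ) : ℤ) * Pn0 = (((i+j).choose i : ℕ) : ℤ) * Pn := by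
    have := w_id p hp.pos i j
    rw [hPn0, hPn, hS]
    exact_mod_cast this
  have hmod : Pn ≡ Pn0 + ((j:ℤ)*p) * ∑ k ∈ S, ∏ k' ∈ S.erase k, ((k':ℤ)+1)
      [ZMOD ((j:ℤ)*p)^2] := by
    have := expandF (fun k => (k:ℤ)+1) ((j:ℤ)*p) S
    exact this
  have hweak : ((p:ℤ)^2) ∣ ((j:ℤ)*p)^2 := ⟨(j:ℤ)^2, by ring⟩
  have hmod2 := hmod.of_dvd hweak
  obtain ⟨t, ht⟩ := w3 p hp hp2 i
  have hzero : Pn0 + ((j:ℤ)*p) * ∑ k ∈ S, ∏ k' ∈ S.erase k, ((k':ℤ)+1) ≡ Pn0 [ZMOD (p:ℤ)^2] := by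
    rw [Int.modEq_iff_dvd, ← hS] at *
    rw [ht]
    exact ⟨-((j:ℤ)*t), by ring⟩
  have hfin : ((((i+j)*p).choose (i*p) : ℕ) : ℤ) * Pn0 ≡ (((i+j).choose i : ℕ) : ℤ) * Pn0
      [ZMOD (p:ℤ)^2] := by
    calc ((((i+j)*p).choose (i*p) : ℕ) : ℤ) * Pn0 = (((i+j).choose i : ℕ) : ℤ) * Pn := hid
      _ ≡ (((i+j).choose i : ℕ) : ℤ) * (Pn0 + _) [ZMOD (p:ℤ)^2] := (hmod2.trans (Int.ModEq.refl _)).mul_left _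
      _ ≡ (((i+j).choose i : ℕ) : ℤ) * Pn0 [ZMOD (p:ℤ)^2] := hzero.mul_left _
  -- cancel Pn0
  have hnotdvd : ¬ (p:ℤ) ∣ Pn0 := by
    rw [← ZMod.intCast_zmod_eq_zero_iff_dvd, hPn0]
    push_cast
    haveI : Fact p.Prime := ⟨hp⟩
    refine (Finset.prod_ne_zero_iff).mpr ?_
    intro k hk
    simp only [hS, mem_filter, mem_range] at hk
    intro h
    apply hk.2
    have : ((k+1 : ℕ) : ZMod p) = 0 := by push_cast; exact h
    exact (ZMod.natCast_eq_zero_iff _ _).mp this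
  have hcop : IsCoprime ((p:ℤ)^2) Pn0 := by
    have hpz : Prime (p:ℤ) := Nat.prime_iff_prime_int.mp hp
    exact (IsCoprime.pow_left (hpz.coprime_iff_not_dvd.mpr hnotdvd))
  have hdvd2 : ((p:ℤ)^2) ∣ ((((i+j).choose i : ℕ) : ℤ) - ((((i+j)*p).choose (i*p) : ℕ) : ℤ)) * Pn0 := by
    have := Int.ModEq.dvd hfin
    have h' : (((i+j).choose i : ℕ) : ℤ) * Pn0 - ((((i+j)*p).choose (i*p) : ℕ) : ℤ) * Pn0
        = ((((i+j).choose i : ℕ) : ℤ) - ((((i+j)*p).choose (i*p) : ℕ) : ℤ)) * Pn0 := by ring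
    rwa [h'] at this
  rw [Int.modEq_iff_dvd]
  exact hcop.dvd_of_dvd_mul_right hdvd2


lemma neg_prod (f : ℕ → ℤ) (s : ℕ) :
    ∏ k ∈ range s, (-(f k)) = (-1)^s * ∏ k ∈ range s, f k := by
  calc ∏ k ∈ range s, (-(f k)) = ∏ k ∈ range s, ((-1) * f k) := by
        apply Finset.prod_congr rfl; intro k _; ring
    _ = (-1)^s * ∏ k ∈ range s, f k := by
        rw [Finset.prod_mul_distrib, Finset.prod_const, card_range]


lemma choose_id (p i j r : ℕ) (hj : 1 ≤ j) (hr0 : 0 < r) (hrp : r < p) :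
    ((((i+j)*p).choose (r + i*p) : ℕ) : ℤ) * (∏ k ∈ range r, ((i:ℤ)*(p:ℤ) + ((k:ℤ)+1)))
    = ((((i+j)*p).choose (i*p) : ℕ) : ℤ) * (∏ k ∈ range r, ((j:ℤ)*(p:ℤ) - (k:ℤ))) := by
  have hrjp : r ≤ j*p := le_trans (le_of_lt hrp) (le_mul_of_one_le_left (Nat.zero_le p) hj)
  have hle1 : r + i*p ≤ (i+j)*p := by
    have : (i+j)*p = i*p + j*p := by ring
    omega
  have hle2 : i*p ≤ (i+j)*p := Nat.mul_le_mul_right p (by omega)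
  have hsub1 : (i+j)*p - (r + i*p) = j*p - r := by
    have : (i+j)*p = i*p + j*p := by ring
    omega
  have hsub2 : (i+j)*p - i*p = j*p := by
    have : (i+j)*p = i*p + j*p := by ring
    omega
  -- ℚ versions
  have f1 : ((((i+j)*p).choose (r + i*p) : ℕ) : ℚ) * ((r + i*p)! : ℚ) * (((j*p - r)! : ℕ) : ℚ)
      = ((((i+j)*p)! : ℕ) : ℚ) := by
    have := Nat.choose_mul_factorial_mul_factorial hle1
    rw [hsub1] at this
    exact_mod_cast congrArg (Nat.cast (R := ℚ)) this
  have f2 : ((((i+j)*p).choose (i*p) : ℕ) : ℚ) * (((i*p)! : ℕ) : ℚ) * (((j*p)! : ℕ) : ℚ)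
      = ((((i+j)*p)! : ℕ) : ℚ) := by
    have := Nat.choose_mul_factorial_mul_factorial hle2
    rw [hsub2] at this
    exact_mod_cast congrArg (Nat.cast (R := ℚ)) this
  have f3 : (((i*p)! : ℕ) : ℚ) * (∏ k ∈ range r, ((i:ℚ)*(p:ℚ) + ((k:ℚ)+1)))
      = (((i*p + r)! : ℕ) : ℚ) := by
    have := aux_asc (i*p) r
    have h2 : ((∏ k ∈ range r, (i*p + (k + 1)) : ℕ) : ℚ) = ∏ k ∈ range r, ((i:ℚ)*(p:ℚ) + ((k:ℚ)+1)) := by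
      push_cast; ring
    calc (((i*p)! : ℕ) : ℚ) * (∏ k ∈ range r, ((i:ℚ)*(p:ℚ) + ((k:ℚ)+1)))
        = (((i*p)! : ℕ) : ℚ) * ((∏ k ∈ range r, (i*p + (k + 1)) : ℕ) : ℚ) := by rw [h2]
      _ = (((i*p + r)! : ℕ) : ℚ) := by exact_mod_cast congrArg (Nat.cast (R := ℚ)) this
  have f4 : (∏ k ∈ range r, ((j:ℚ)*(p:ℚ) - (k:ℚ))) * (((j*p - r)! : ℕ) : ℚ)
      = (((j*p)! : ℕ) : ℚ) := by
    have := aux_desc (j*p) r hrjp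
    have h2 : (((∏ k ∈ range r, (((j*p : ℕ) : ℤ) - (k:ℤ))) : ℤ) : ℚ) = ∏ k ∈ range r, ((j:ℚ)*(p:ℚ) - (k:ℚ)) := by
      push_cast; ring
    calc (∏ k ∈ range r, ((j:ℚ)*(p:ℚ) - (k:ℚ))) * (((j*p - r)! : ℕ) : ℚ)
        = (((∏ k ∈ range r, (((j*p : ℕ) : ℤ) - (k:ℤ))) : ℤ) : ℚ) * (((j*p - r)! : ℕ) : ℚ) := by rw [h2]
      _ = (((j*p)! : ℕ) : ℚ) := by exact_mod_cast this
  have hc0 : ((((i*p)! : ℕ) : ℚ)) * (((j*p - r)! : ℕ) : ℚ) ≠ 0 := by positivity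
  have key : (((((i+j)*p).choose (r + i*p) : ℕ) : ℚ) * (∏ k ∈ range r, ((i:ℚ)*(p:ℚ) + ((k:ℚ)+1))))
      * ((((i*p)! : ℕ) : ℚ) * (((j*p - r)! : ℕ) : ℚ))
      = (((((i+j)*p).choose (i*p) : ℕ) : ℚ) * (∏ k ∈ range r, ((j:ℚ)*(p:ℚ) - (k:ℚ))))
      * ((((i*p)! : ℕ) : ℚ) * (((j*p - r)! : ℕ) : ℚ)) := by
    have hcomm : ((r + i*p)! : ℚ) = (((i*p + r)! : ℕ) : ℚ) := by rw [Nat.add_comm]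
    rw [hcomm] at f1
    linear_combination ((((i+j)*p).choose (r + i*p) : ℕ) : ℚ) * (((j*p - r)! : ℕ) : ℚ) * f3
      + f1 - f2 - ((((i+j)*p).choose (i*p) : ℕ) : ℚ) * (((i*p)! : ℕ) : ℚ) * f4
  have := mul_right_cancel₀ hc0 key
  exact_mod_cast this

theorem stmt_8 (p : ℕ) (hp : p.Prime) (hp2 : 2 < p) (i j : ℕ)
    (r : ℕ) (hr0 : 0 < r) (hrp : r < p) :
    padicNorm p
        ((((i + j) * p).choose (r + i * p) : ℚ) -
          ((i + j).choose i : ℚ) * (p.choose r : ℚ) * (j : ℚ) *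
            (1 - (p : ℚ) * (((i : ℚ) + (j : ℚ) - 1) * H (r - 1) + (i : ℚ) / (r : ℚ)))) ≤
      (p : ℚ)^(-3 : ℤ) := by
  haveI : Fact p.Prime := ⟨hp⟩
  have hppos : (0:ℚ) < (p:ℚ) := by exact_mod_cast hp.pos
  obtain ⟨r', rfl⟩ : ∃ r', r = r' + 1 := ⟨r-1, by omega⟩
  simp only [Nat.add_sub_cancel]
  rcases Nat.eq_zero_or_pos j with hj | hj
  · subst hj
    have hch : ((i + 0) * p).choose (r' + 1 + i * p) = 0 :=
      Nat.choose_eq_zero_of_lt (by simp)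
    rw [hch]
    simp only [Nat.cast_zero, mul_zero, zero_mul, sub_zero, zero_sub, padicNorm.neg,
      padicNorm.zero]
    positivity
  -- main case
  · set A : ℤ := ((((i+j)*p).choose (r'+1 + i*p) : ℕ) : ℤ) with hA
    set B : ℤ := ((((i+j)*p).choose (i*p) : ℕ) : ℤ) with hB
    set c : ℤ := (((i+j).choose i : ℕ) : ℤ) with hc
    set cp : ℤ := ((p.choose (r'+1) : ℕ) : ℤ) with hcp
    set F : ℤ := ((r' ! : ℕ) : ℤ) with hF
    set R : ℤ := (((r'+1)! : ℕ) : ℤ) with hR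
    set G : ℤ := Gz r' with hG
    set K : ℤ := Gz (r'+1) with hK
    set Q2 : ℤ := ∏ k ∈ range (r'+1), ((i:ℤ)*(p:ℤ) + ((k:ℤ)+1)) with hQ2
    set Q1 : ℤ := ∏ k ∈ range r', ((j:ℤ)*(p:ℤ) - ((k:ℤ)+1)) with hQ1
    set Dp : ℤ := ∏ k ∈ range r', ((p:ℤ) - ((k:ℤ)+1)) with hDp
    set M : ℤ := (((i:ℤ)+(j:ℤ))-1)*((r':ℤ)+1)*G + (i:ℤ)*F with hM
    set T : ℤ := c * cp * (j:ℤ) * (R - (p:ℤ)*M) with hT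
    set ε : ℤ := (-1:ℤ)^r' with he
    -- s1
    have s1 : A * Q2 = B * (∏ k ∈ range (r'+1), ((j:ℤ)*(p:ℤ) - (k:ℤ))) :=
      choose_id p i j (r'+1) hj (by omega) hrp
    -- s2
    have s2 : (∏ k ∈ range (r'+1), ((j:ℤ)*(p:ℤ) - (k:ℤ))) = ((j:ℤ)*(p:ℤ)) * Q1 := by
      rw [Finset.prod_range_succ']
      have hcg : (∏ k ∈ range r', ((j:ℤ)*(p:ℤ) - ((k+1 : ℕ):ℤ))) = Q1 :=
        Finset.prod_congr rfl (fun k _ => by push_cast; ring)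
      rw [hcg]
      push_cast
      ring
    -- s3
    have s3 : B ≡ c [ZMOD (p:ℤ)^2] := wolst p hp hp2 i j
    -- s4
    have s4 : Q1 ≡ ε * (F - ((j:ℤ)*(p:ℤ)) * G) [ZMOD (p:ℤ)^2] := by
      have e := expandE (-((j:ℤ)*(p:ℤ))) r'
      rw [show (-((j:ℤ)*(p:ℤ)))^2 = ((j:ℤ)*(p:ℤ))^2 from by ring] at e
      have e2 := e.of_dvd (⟨(j:ℤ)^2, by ring⟩ : ((p:ℤ)^2) ∣ ((j:ℤ)*(p:ℤ))^2)
      have hsign : Q1 = ε * ∏ k ∈ range r', ((-((j:ℤ)*(p:ℤ))) + ((k:ℤ)+1)) := by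
        rw [hQ1, he]
        rw [show (∏ k ∈ range r', ((j:ℤ)*(p:ℤ) - ((k:ℤ)+1)))
            = ∏ k ∈ range r', (-((-((j:ℤ)*(p:ℤ))) + ((k:ℤ)+1))) from
          Finset.prod_congr rfl (fun k _ => by ring)]
        rw [neg_prod]
      calc Q1 = ε * ∏ k ∈ range r', ((-((j:ℤ)*(p:ℤ))) + ((k:ℤ)+1)) := hsign
        _ ≡ ε * ((r' ! : ℕ) + (-((j:ℤ)*(p:ℤ))) * Gz r') [ZMOD (p:ℤ)^2] := e2.mul_left ε
        _ = ε * (F - ((j:ℤ)*(p:ℤ)) * G) := by rw [hF, hG]; ring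
    -- s5
    have s5 : Q2 ≡ R + ((i:ℤ)*(p:ℤ)) * K [ZMOD (p:ℤ)^2] := by
      have e := expandE ((i:ℤ)*(p:ℤ)) (r'+1)
      have e2 := e.of_dvd (⟨(i:ℤ)^2, by ring⟩ : ((p:ℤ)^2) ∣ ((i:ℤ)*(p:ℤ))^2)
      exact e2
    -- s6
    have s6 : cp * R = (p:ℤ) * Dp := by
      have hd := aux_desc p (r'+1) (le_of_lt hrp)
      have hcc := Nat.choose_mul_factorial_mul_factorial (le_of_lt hrp : r'+1 ≤ p)
      have hcast : cp * R * (((p - (r'+1))! : ℕ) : ℤ) = ((p ! : ℕ) : ℤ) := by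
        rw [hcp, hR]; exact_mod_cast congrArg (Nat.cast (R := ℤ)) hcc
      have h2 : (∏ k ∈ range (r'+1), ((p:ℤ) - (k:ℤ))) = (p:ℤ) * Dp := by
        rw [Finset.prod_range_succ']
        have hcg : (∏ k ∈ range r', ((p:ℤ) - ((k+1 : ℕ):ℤ))) = Dp :=
          Finset.prod_congr rfl (fun k _ => by push_cast; ring)
        rw [hcg]
        push_cast
        ring
      have h3 : cp * R * (((p - (r'+1))! : ℕ) : ℤ) = ((p:ℤ) * Dp) * (((p - (r'+1))! : ℕ) : ℤ) := by
        rw [hcast, ← h2]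
        exact (hd).symm
      have hne : (((p - (r'+1))! : ℕ) : ℤ) ≠ 0 := by
        exact_mod_cast (Nat.factorial_pos _).ne'
      exact mul_right_cancel₀ hne h3
    -- s7
    have s7 : Dp ≡ ε * (F - (p:ℤ) * G) [ZMOD (p:ℤ)^2] := by
      have e := expandE (-(p:ℤ)) r'
      rw [show (-(p:ℤ))^2 = ((p:ℤ))^2 from by ring] at e
      have hsign : Dp = ε * ∏ k ∈ range r', ((-(p:ℤ)) + ((k:ℤ)+1)) := by
        rw [hDp, he]
        rw [show (∏ k ∈ range r', ((p:ℤ) - ((k:ℤ)+1)))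
            = ∏ k ∈ range r', (-((-(p:ℤ)) + ((k:ℤ)+1))) from
          Finset.prod_congr rfl (fun k _ => by ring)]
        rw [neg_prod]
      calc Dp = ε * ∏ k ∈ range r', ((-(p:ℤ)) + ((k:ℤ)+1)) := hsign
        _ ≡ ε * ((r' ! : ℕ) + (-(p:ℤ)) * Gz r') [ZMOD (p:ℤ)^2] := e.mul_left ε
        _ = ε * (F - (p:ℤ) * G) := by rw [hF, hG]; ring
    -- s8, s9
    have s8 : K = ((r':ℤ)+1)*G + F := by
      have := Gz_rec (r'+1) (by omega)
      simp only [Nat.add_sub_cancel] at this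
      rw [hK, hG, hF, this]
      push_cast
      ring
    have s9 : R = ((r':ℤ)+1) * F := by
      rw [hR, hF]
      exact_mod_cast congrArg (Nat.cast (R := ℤ)) (Nat.factorial_succ r')
    -- core divisibility
    have hY : (A * R - T) * (Q2 * R)
        = (p:ℤ) * (j:ℤ) * (R^2 * B * Q1 - c * (R - (p:ℤ)*M) * Q2 * Dp) := by
      calc (A * R - T) * (Q2 * R)
          = R^2 * (A * Q2) - (c * (j:ℤ) * (R - (p:ℤ)*M)) * Q2 * (cp * R) := by rw [hT]; ring
        _ = R^2 * (B * (((j:ℤ)*(p:ℤ)) * Q1)) - (c * (j:ℤ) * (R - (p:ℤ)*M)) * Q2 * ((p:ℤ) * Dp) := by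
            rw [s1, s2, s6]
        _ = (p:ℤ) * (j:ℤ) * (R^2 * B * Q1 - c * (R - (p:ℤ)*M) * Q2 * Dp) := by ring
    have core : (p:ℤ)^3 ∣ (A * R - T) * (Q2 * R) := by
      suffices h2 : (p:ℤ)^2 ∣ (R^2 * B * Q1 - c * (R - (p:ℤ)*M) * Q2 * Dp) by
        obtain ⟨w, hw⟩ := h2
        rw [hY, hw]
        exact ⟨(j:ℤ)*w, by ring⟩
      have m1 : R^2 * B * Q1 ≡ R^2 * c * (ε * (F - ((j:ℤ)*(p:ℤ)) * G)) [ZMOD (p:ℤ)^2] := by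
        calc R^2 * B * Q1 = R^2 * (B * Q1) := by ring
          _ ≡ R^2 * (c * (ε * (F - ((j:ℤ)*(p:ℤ)) * G))) [ZMOD (p:ℤ)^2] := (s3.mul s4).mul_left _
          _ = R^2 * c * (ε * (F - ((j:ℤ)*(p:ℤ)) * G)) := by ring
      have m2 : c * (R - (p:ℤ)*M) * Q2 * Dp
          ≡ c * (R - (p:ℤ)*M) * (R + ((i:ℤ)*(p:ℤ)) * K) * (ε * (F - (p:ℤ) * G)) [ZMOD (p:ℤ)^2] := by
        calc c * (R - (p:ℤ)*M) * Q2 * Dp = (c * (R - (p:ℤ)*M)) * (Q2 * Dp) := by ring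
          _ ≡ (c * (R - (p:ℤ)*M)) * ((R + ((i:ℤ)*(p:ℤ)) * K) * (ε * (F - (p:ℤ) * G))) [ZMOD (p:ℤ)^2] :=
              (s5.mul s7).mul_left _
          _ = c * (R - (p:ℤ)*M) * (R + ((i:ℤ)*(p:ℤ)) * K) * (ε * (F - (p:ℤ) * G)) := by ring
      have msub := m1.sub m2
      have hW : R^2 * c * (ε * (F - ((j:ℤ)*(p:ℤ)) * G))
          - c * (R - (p:ℤ)*M) * (R + ((i:ℤ)*(p:ℤ)) * K) * (ε * (F - (p:ℤ) * G))
          = (p:ℤ)^2 * (c * ε * (G * R * ((i:ℤ)*K - M) + (i:ℤ)*K*M*F - (p:ℤ)*((i:ℤ)*K*M*G))) := by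
        rw [s8, s9, hM]
        ring
      have hdvd : ((p:ℤ)^2) ∣ (R^2 * c * (ε * (F - ((j:ℤ)*(p:ℤ)) * G))
          - c * (R - (p:ℤ)*M) * (R + ((i:ℤ)*(p:ℤ)) * K) * (ε * (F - (p:ℤ) * G))) :=
        ⟨_, hW⟩
      have := (Int.ModEq.dvd msub)
      -- this : p^2 ∣ RHS - LHS
      have goal' := dvd_sub hdvd this
      -- hdvd : p^2 ∣ RHS'; careful directions
      simpa using goal'
    -- coprimality transfer
    have hQ2p : ¬ (p:ℤ) ∣ Q2 := by
      rw [← ZMod.intCast_zmod_eq_zero_iff_dvd, hQ2]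
      push_cast
      refine (Finset.prod_ne_zero_iff).mpr ?_
      intro k hk
      rw [ZMod.natCast_self]
      simp only [mul_zero, zero_add]
      intro hzero
      have : ((k+1 : ℕ) : ZMod p) = 0 := by push_cast; linear_combination hzero
      have := (ZMod.natCast_eq_zero_iff _ _).mp this
      have := Nat.le_of_dvd (by omega) this
      have := Finset.mem_range.mp hk
      omega
    have hRp : ¬ (p:ℤ) ∣ R := by
      rw [hR, Int.natCast_dvd_natCast, hp.dvd_factorial]
      omega
    have hprime : Prime (p:ℤ) := Nat.prime_iff_prime_int.mp hp
    have hcop : IsCoprime ((p:ℤ)^3) (Q2 * R) := by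
      apply IsCoprime.pow_left
      exact IsCoprime.mul_right (hprime.coprime_iff_not_dvd.mpr hQ2p)
        (hprime.coprime_iff_not_dvd.mpr hRp)
    have final : (p:ℤ)^3 ∣ (A * R - T) := hcop.dvd_of_dvd_mul_right core
    -- back to ℚ
    have hfacne : (((r'+1)! : ℕ) : ℚ) ≠ 0 := by positivity
    have hrne : ((r' : ℚ) + 1) ≠ 0 := by positivity
    have hXeq : ((((i + j) * p).choose (r'+1 + i * p) : ℚ) -
          ((i + j).choose i : ℚ) * (p.choose (r'+1) : ℚ) * (j : ℚ) *
            (1 - (p : ℚ) * (((i : ℚ) + (j : ℚ) - 1) * H r' + (i : ℚ) / ((r'+1 : ℕ) : ℚ))))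
        = (((A * R - T : ℤ)) : ℚ) / (((r'+1)! : ℕ) : ℚ) := by
      rw [eq_div_iff hfacne]
      rw [show ((r'+1)! : ℕ) = (r'+1) * r' ! from Nat.factorial_succ r']
      rw [hT, hM, hA, hc, hcp, s9, hG, hF]
      have hGc := Gz_cast r'
      push_cast [hGc]
      field_simp
    rw [hXeq, padicNorm.div]
    have h1 : padicNorm p (((r'+1)! : ℕ) : ℚ) = 1 := by
      rw [padicNorm.nat_eq_one_iff]
      rw [hp.dvd_factorial]
      omega
    rw [h1, div_one]
    have hle := (padicNorm.dvd_iff_norm_le (p := p) (n := 3) (z := A * R - T)).mp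
      (by exact_mod_cast final)
    simpa using hle
end

section
/- Let p > 2 be a prime, let i and j be nonnegative integers, and let m, k be integers with 0 ≤ m ≤ k < p. Then C(k+(i+j)p, m+ip) is congruent modulo p^2 (as rational numbers) to C(i+j, i) * C(k, m) * (1 + p*((i+j)*H_k - j*H_{k-m} - i*H_m)). -/
namespace S10

/-- `F p a c = ∏_{t=1}^{c} (1 + a p / t)`. -/
def F (p a c : ℕ) : ℚ := ∏ t ∈ Finset.range c, (1 + (a : ℚ) * p / ((t : ℚ) + 1))

lemma F_pos (p a c : ℕ) : 0 < F p a c := by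
  apply Finset.prod_pos
  intro t _
  positivity

lemma fact_eq (p a c : ℕ) :
    ((c + a * p).factorial : ℚ) = ((a * p).factorial : ℚ) * (c.factorial : ℚ) * F p a c := by
  induction c with
  | zero => simp [F]
  | succ c ih =>
    have h1 : (c + 1) + a * p = (c + a * p) + 1 := by ring
    rw [h1, Nat.factorial_succ, Nat.factorial_succ]
    have hF : F p a (c + 1) = F p a c * (1 + (a : ℚ) * p / ((c : ℚ) + 1)) := by
      rw [F, Finset.prod_range_succ]; rfl
    rw [hF]
    push_cast
    rw [ih]
    have hc : ((c : ℚ) + 1) ≠ 0 := by positivity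
    field_simp
    ring

variable {p : ℕ} [hp : Fact p.Prime]

lemma choose_eq (m r i j : ℕ) :
    ((((m + r) + (i + j) * p).choose (m + i * p)) : ℚ)
      = ((((i + j) * p).choose (i * p)) : ℚ) * (((m + r).choose m) : ℚ) * F p (i + j) (m + r)
        / (F p i m * F p j r) := by
  have hu : F p i m ≠ 0 := ne_of_gt (F_pos p i m)
  have hv : F p j r ≠ 0 := ne_of_gt (F_pos p j r)
  have hf : ∀ n : ℕ, ((n.factorial : ℚ)) ≠ 0 :=
    fun n => Nat.cast_ne_zero.mpr (Nat.factorial_ne_zero n)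
  rw [eq_div_iff (mul_ne_zero hu hv)]
  -- main factorial identities
  have e1 : (m + r) + (i + j) * p = (m + i * p) + (r + j * p) := by ring
  have hA := Nat.choose_mul_factorial_mul_factorial
    (show (m + i * p) ≤ (m + i * p) + (r + j * p) from Nat.le_add_right _ _)
  rw [Nat.add_sub_cancel_left] at hA
  have hB := Nat.choose_mul_factorial_mul_factorial
    (show (i * p) ≤ (i * p) + (j * p) from Nat.le_add_right _ _)
  rw [Nat.add_sub_cancel_left] at hB
  have hC := Nat.choose_mul_factorial_mul_factorial
    (show m ≤ m + r from Nat.le_add_right _ _)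
  rw [Nat.add_sub_cancel_left] at hC
  have e2 : (i + j) * p = (i * p) + (j * p) := by ring
  -- cast them to ℚ
  have hAq : ((((m + r) + (i + j) * p).choose (m + i * p)) : ℚ)
      * ((m + i * p).factorial : ℚ) * ((r + j * p).factorial : ℚ)
      = (((m + r) + (i + j) * p).factorial : ℚ) := by
    rw [e1]; exact_mod_cast congrArg (Nat.cast (R := ℚ)) hA
  have hBq : ((((i + j) * p).choose (i * p)) : ℚ)
      * ((i * p).factorial : ℚ) * ((j * p).factorial : ℚ)
      = (((i + j) * p).factorial : ℚ) := by
    rw [e2]; exact_mod_cast congrArg (Nat.cast (R := ℚ)) hB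
  have hCq : (((m + r).choose m) : ℚ) * (m.factorial : ℚ) * (r.factorial : ℚ)
      = ((m + r).factorial : ℚ) := by
    exact_mod_cast congrArg (Nat.cast (R := ℚ)) hC
  -- factor the three "shifted" factorials
  have f1 : (((m + r) + (i + j) * p).factorial : ℚ)
      = (((i + j) * p).factorial : ℚ) * ((m + r).factorial : ℚ) * F p (i + j) (m + r) :=
    fact_eq p (i + j) (m + r)
  have f2 : ((m + i * p).factorial : ℚ)
      = ((i * p).factorial : ℚ) * (m.factorial : ℚ) * F p i m := fact_eq p i m
  have f3 : ((r + j * p).factorial : ℚ)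
      = ((j * p).factorial : ℚ) * (r.factorial : ℚ) * F p j r := fact_eq p j r
  rw [f1, f2, f3, ← hBq, ← hCq] at hAq
  -- cancel the four factorials
  have hD : ((i * p).factorial : ℚ) * (m.factorial : ℚ) * ((j * p).factorial : ℚ)
      * (r.factorial : ℚ) ≠ 0 := by
    exact mul_ne_zero (mul_ne_zero (mul_ne_zero (hf _) (hf _)) (hf _)) (hf _)
  apply mul_right_cancel₀ hD
  linear_combination hAq

/-- Babbage-type congruence: `C(Np, Mp) ≡ C(N, M) (mod p²)`. -/
lemma babbage : ∀ N M : ℕ, (p : ℤ) ^ 2 ∣ (((N * p).choose (M * p)) : ℤ) - ((N.choose M) : ℤ) := by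
  intro N
  induction N with
  | zero =>
    intro M
    cases M with
    | zero => simp
    | succ M =>
      have h1 : (0 : ℕ).choose ((M + 1) * p) = 0 := by
        apply Nat.choose_eq_zero_of_lt
        have := hp.out.pos
        positivity
      have h2 : (0 : ℕ).choose (M + 1) = 0 := Nat.choose_eq_zero_of_lt (Nat.succ_pos M)
      simp [h1, h2]
  | succ N ih =>
    intro M
    cases M with
    | zero => simp
    | succ M =>
      have hppos := hp.out.pos
      have h1 : (N + 1) * p = N * p + p := by ring
      set K := (M + 1) * p with hK
      rw [h1, Nat.add_choose_eq, Finset.Nat.sum_antidiagonal_eq_sum_range_succ_mk]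
      -- goal: p^2 ∣ (∑ b in range (K+1), C(Np,b) * C(p, K-b)) - C(N+1, M+1)
      set f : ℕ → ℤ := fun b => (((N * p).choose b : ℕ) : ℤ) * ((p.choose (K - b) : ℕ) : ℤ)
        with hf
      have hcast : ((∑ b ∈ Finset.range (K + 1),
          (N * p).choose b * p.choose (K - b) : ℕ) : ℤ)
          = ∑ b ∈ Finset.range (K + 1), f b := by
        push_cast [hf]; rfl
      rw [hcast]
      have hKmem : K ∈ Finset.range (K + 1) := Finset.self_mem_range_succ K
      have hMpmem : M * p ∈ (Finset.range (K + 1)).erase K := by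
        apply Finset.mem_erase.mpr
        constructor
        · have : M * p < (M + 1) * p := by
            have h := hppos
            nlinarith
          omega
        · exact Finset.mem_range.mpr (by
            have : M * p ≤ (M + 1) * p := Nat.mul_le_mul_right p (Nat.le_succ M)
            omega)
      rw [← Finset.add_sum_erase _ f hKmem, ← Finset.add_sum_erase _ f hMpmem]
      have hfK : f K = (((N * p).choose K : ℕ) : ℤ) := by
        simp [hf]
      have hfMp : f (M * p) = (((N * p).choose (M * p) : ℕ) : ℤ) := by
        have : K - M * p = p := by
          rw [hK]; rw [Nat.succ_mul]; omega
        simp [hf, this]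
      have hrest : (p : ℤ) ^ 2 ∣ ∑ b ∈ ((Finset.range (K + 1)).erase K).erase (M * p), f b := by
        apply Finset.dvd_sum
        intro b hb
        have hb1 : b ≠ M * p := (Finset.mem_erase.mp hb).1
        have hb2 : b ≠ K := (Finset.mem_erase.mp (Finset.mem_erase.mp hb).2).1
        have hb3 : b < K + 1 := Finset.mem_range.mp
          (Finset.mem_erase.mp (Finset.mem_erase.mp hb).2).2
        rcases lt_trichotomy b (M * p) with hlt | heq | hgt
        · -- K - b > p, so C(p, K-b) = 0
          have : p < K - b := by
            rw [hK, Nat.succ_mul]; omega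
          have : p.choose (K - b) = 0 := Nat.choose_eq_zero_of_lt this
          simp [hf, this]
        · exact absurd heq hb1
        · -- M*p < b < K, so 0 < K - b < p
          have hc1 : 0 < K - b := by omega
          have hc2 : K - b < p := by rw [hK, Nat.succ_mul] at *; omega
          have hd1 : (p : ℤ) ∣ ((p.choose (K - b) : ℕ) : ℤ) :=
            Int.natCast_dvd_natCast.mpr (Nat.Prime.dvd_choose_self hp.out (by omega) hc2)
          have hd2 : (p : ℤ) ∣ (((N * p).choose b : ℕ) : ℤ) := by
            -- Lucas: b % p = p - (K - b) ≠ 0 while (N*p) % p = 0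
            have hmod := Choose.choose_modEq_choose_mod_mul_choose_div_nat
              (p := p) (n := N * p) (k := b)
            have hnp : (N * p) % p = 0 := Nat.mul_mod_left N p
            have hbmod : b % p ≠ 0 := by
              intro h
              obtain ⟨c, hc⟩ := Nat.dvd_of_mod_eq_zero h
              have hble : b ≤ K := by omega
              have hblt : b < K := lt_of_le_of_ne hble hb2
              rw [hc] at hgt hblt
              have h5 : M < c := by
                by_contra hcon
                push_neg at hcon
                have : p * c ≤ p * M := Nat.mul_le_mul_left p hcon
                nlinarith
              have h6 : p * (M + 1) ≤ p * c := Nat.mul_le_mul_left p h5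
              rw [hK] at hblt
              nlinarith
            have hz : (N * p % p).choose (b % p) = 0 := by
              rw [hnp]
              exact Nat.choose_eq_zero_of_lt (Nat.pos_of_ne_zero hbmod)
            rw [hz, Nat.zero_mul] at hmod
            have : p ∣ (N * p).choose b := (Nat.modEq_zero_iff_dvd).mp hmod
            exact_mod_cast Int.natCast_dvd_natCast.mpr this
          have : (p : ℤ) ^ 2 = p * p := sq (p : ℤ)
          rw [this]
          exact mul_dvd_mul hd2 hd1
      have hch : ((N + 1).choose (M + 1) : ℤ)
          = ((N.choose M : ℕ) : ℤ) + ((N.choose (M + 1) : ℕ) : ℤ) := by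
        exact_mod_cast congrArg (Nat.cast (R := ℤ)) (Nat.choose_succ_succ N M)
      have ih1 := ih (M + 1)
      have ih2 := ih M
      rw [hfK, hfMp, hch]
      have decomp : (((N * p).choose K : ℕ) : ℤ)
            + ((((N * p).choose (M * p) : ℕ) : ℤ)
            + ∑ b ∈ ((Finset.range (K + 1)).erase K).erase (M * p), f b)
            - (((N.choose M : ℕ) : ℤ) + ((N.choose (M + 1) : ℕ) : ℤ))
          = ((((N * p).choose ((M + 1) * p) : ℕ) : ℤ) - ((N.choose (M + 1) : ℕ) : ℤ))
            + ((((N * p).choose (M * p) : ℕ) : ℤ) - ((N.choose M : ℕ) : ℤ))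
            + ∑ b ∈ ((Finset.range (K + 1)).erase K).erase (M * p), f b := by
        rw [hK]; ring
      rw [decomp]
      exact dvd_add (dvd_add ih1 ih2) hrest

section Norms
variable {p : ℕ} [hp : Fact p.Prime]

lemma I2_nonneg : (0 : ℚ) ≤ (p : ℚ) ^ (-2 : ℤ) := by
  have := hp.out.pos
  positivity

lemma I2_add {x y : ℚ} (hx : padicNorm p x ≤ (p : ℚ) ^ (-2 : ℤ))
    (hy : padicNorm p y ≤ (p : ℚ) ^ (-2 : ℤ)) :
    padicNorm p (x + y) ≤ (p : ℚ) ^ (-2 : ℤ) :=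
  le_trans padicNorm.nonarchimedean (max_le hx hy)

lemma I2_sub {x y : ℚ} (hx : padicNorm p x ≤ (p : ℚ) ^ (-2 : ℤ))
    (hy : padicNorm p y ≤ (p : ℚ) ^ (-2 : ℤ)) :
    padicNorm p (x - y) ≤ (p : ℚ) ^ (-2 : ℤ) :=
  le_trans padicNorm.sub (max_le hx hy)

lemma I2_mul_I1 {x y : ℚ} (hx : padicNorm p x ≤ (p : ℚ) ^ (-2 : ℤ))
    (hy : padicNorm p y ≤ 1) : padicNorm p (x * y) ≤ (p : ℚ) ^ (-2 : ℤ) := by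
  rw [padicNorm.mul]
  calc padicNorm p x * padicNorm p y ≤ (p : ℚ) ^ (-2 : ℤ) * 1 :=
        mul_le_mul hx hy (padicNorm.nonneg y) I2_nonneg
    _ = (p : ℚ) ^ (-2 : ℤ) := mul_one _

lemma I1_mul_I2 {x y : ℚ} (hx : padicNorm p x ≤ 1)
    (hy : padicNorm p y ≤ (p : ℚ) ^ (-2 : ℤ)) :
    padicNorm p (x * y) ≤ (p : ℚ) ^ (-2 : ℤ) := by
  rw [mul_comm]; exact I2_mul_I1 hy hx

lemma I1_mul {x y : ℚ} (hx : padicNorm p x ≤ 1) (hy : padicNorm p y ≤ 1) :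
    padicNorm p (x * y) ≤ 1 := by
  rw [padicNorm.mul]
  calc padicNorm p x * padicNorm p y ≤ 1 * 1 :=
        mul_le_mul hx hy (padicNorm.nonneg y) zero_le_one
    _ = 1 := mul_one 1

lemma I1_add {x y : ℚ} (hx : padicNorm p x ≤ 1) (hy : padicNorm p y ≤ 1) :
    padicNorm p (x + y) ≤ 1 :=
  le_trans padicNorm.nonarchimedean (max_le hx hy)

lemma I1_sub {x y : ℚ} (hx : padicNorm p x ≤ 1) (hy : padicNorm p y ≤ 1) :
    padicNorm p (x - y) ≤ 1 :=
  le_trans padicNorm.sub (max_le hx hy)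

lemma I1_nat (n : ℕ) : padicNorm p (n : ℚ) ≤ 1 := padicNorm.of_nat n

lemma norm_p_sq : padicNorm p ((p : ℚ) ^ 2) = (p : ℚ) ^ (-2 : ℤ) := by
  have hp1 : 1 < p := hp.out.one_lt
  have h0 : (0 : ℚ) < p := by exact_mod_cast hp.out.pos
  rw [sq, padicNorm.mul, padicNorm.padicNorm_p hp1]
  rw [show (-2 : ℤ) = -1 + -1 by norm_num, zpow_add₀ (ne_of_gt h0)]
  simp [zpow_neg]

lemma I2_p2_mul {x : ℚ} (hx : padicNorm p x ≤ 1) :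
    padicNorm p ((p : ℚ) ^ 2 * x) ≤ (p : ℚ) ^ (-2 : ℤ) := by
  rw [padicNorm.mul, norm_p_sq]
  calc (p : ℚ) ^ (-2 : ℤ) * padicNorm p x ≤ (p : ℚ) ^ (-2 : ℤ) * 1 :=
        mul_le_mul_of_nonneg_left hx I2_nonneg
    _ = _ := mul_one _

lemma norm_p_le : padicNorm p (p : ℚ) ≤ 1 := I1_nat p

lemma norm_inv_eq {t : ℕ} (h0 : 0 < t) (htp : t < p) :
    padicNorm p (((t : ℕ) : ℚ)⁻¹) = 1 := by
  have h2 : padicNorm p ((t : ℕ) : ℚ) = 1 := by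
    rw [padicNorm.nat_eq_one_iff]
    intro hdvd
    have := Nat.le_of_dvd h0 hdvd
    omega
  rw [← one_div, padicNorm.div, padicNorm.one, h2]
  norm_num

lemma norm_H_le {c : ℕ} (hc : c < p) : padicNorm p (H c) ≤ 1 := by
  apply padicNorm.sum_le' ?_ zero_le_one
  intro t ht
  have htc : t < c := Finset.mem_range.mp ht
  have h1 : ((t : ℚ) + 1) = ((t + 1 : ℕ) : ℚ) := by push_cast; ring
  rw [h1, one_div, norm_inv_eq (Nat.succ_pos t) (by omega)]


lemma pneg2_eq : ((p : ℚ)) ^ (-2 : ℤ) = (p : ℚ)⁻¹ * (p : ℚ)⁻¹ := by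
  have h0 : (0 : ℚ) < p := by exact_mod_cast hp.out.pos
  rw [show (-2 : ℤ) = -1 + -1 by norm_num, zpow_add₀ (ne_of_gt h0)]
  simp [zpow_neg]

lemma I2_le_pinv : ((p : ℚ)) ^ (-2 : ℤ) ≤ (p : ℚ)⁻¹ := by
  have h1 : (1 : ℚ) < p := by exact_mod_cast hp.out.one_lt
  have h0 : (0 : ℚ) < (p : ℚ)⁻¹ := by positivity
  rw [pneg2_eq]
  calc (p : ℚ)⁻¹ * (p : ℚ)⁻¹ ≤ (p : ℚ)⁻¹ * 1 :=
        mul_le_mul_of_nonneg_left (le_of_lt (inv_lt_one_of_one_lt₀ h1)) (le_of_lt h0)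
    _ = _ := mul_one _

lemma I2_le_one : ((p : ℚ)) ^ (-2 : ℤ) ≤ 1 := by
  have h1 : (1 : ℚ) < p := by exact_mod_cast hp.out.one_lt
  exact le_trans I2_le_pinv (le_of_lt (inv_lt_one_of_one_lt₀ h1))

lemma unit_of {x y : ℚ} (hy : padicNorm p y ≤ 1)
    (he : padicNorm p (x - (1 + (p : ℚ) * y)) ≤ (p : ℚ) ^ (-2 : ℤ)) :
    padicNorm p x = 1 := by
  have h1 : (1 : ℚ) < p := by exact_mod_cast hp.out.one_lt
  have hpinv : (p : ℚ)⁻¹ < 1 := inv_lt_one_of_one_lt₀ h1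
  have hnp : padicNorm p ((p : ℚ) * y) ≤ (p : ℚ)⁻¹ := by
    rw [padicNorm.mul, padicNorm.padicNorm_p hp.out.one_lt]
    calc (p : ℚ)⁻¹ * padicNorm p y ≤ (p : ℚ)⁻¹ * 1 :=
          mul_le_mul_of_nonneg_left hy (by positivity)
      _ = _ := mul_one _
  have hx1 : padicNorm p (x - 1) < 1 := by
    have hxe : x - 1 = (x - (1 + (p : ℚ) * y)) + (p : ℚ) * y := by ring
    rw [hxe]
    exact lt_of_le_of_lt
      (le_trans padicNorm.nonarchimedean (max_le (le_trans he I2_le_pinv) hnp)) hpinv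
  have hne : padicNorm p (1 : ℚ) ≠ padicNorm p (x - 1) := by
    rw [padicNorm.one]; exact (ne_of_lt hx1).symm
  have hmax := padicNorm.add_eq_max_of_ne (p := p) hne
  rw [show (1 : ℚ) + (x - 1) = x by ring, padicNorm.one] at hmax
  rw [hmax]
  exact max_eq_left (le_of_lt hx1)

end Norms

section Expand
variable {p : ℕ} [hp : Fact p.Prime]

lemma F_expand {a c : ℕ} (hc : c < p) :
    padicNorm p (F p a c - (1 + (a : ℚ) * p * H c)) ≤ (p : ℚ) ^ (-2 : ℤ) := by
  induction c with
  | zero =>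
    have h0 : F p a 0 - (1 + (a : ℚ) * p * H 0) = 0 := by simp [F, H]
    rw [h0, padicNorm.zero]
    exact I2_nonneg
  | succ c ih =>
    have hcp : c < p := by omega
    have ihc := ih hcp
    have hc0 : ((c : ℚ) + 1) ≠ 0 := by positivity
    have hFs : F p a (c + 1) = F p a c * (1 + (a : ℚ) * p / ((c : ℚ) + 1)) := by
      rw [F, Finset.prod_range_succ]; rfl
    have hHs : H (c + 1) = H c + 1 / ((c : ℚ) + 1) := by
      simp [H, Finset.sum_range_succ]
    have hid : F p a (c + 1) - (1 + (a : ℚ) * p * H (c + 1))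
        = ((a : ℚ) * p * H c) * ((a : ℚ) * p * (((c : ℚ) + 1))⁻¹)
          + (F p a c - (1 + (a : ℚ) * p * H c)) * (1 + (a : ℚ) * p * (((c : ℚ) + 1))⁻¹) := by
      rw [hFs, hHs]
      field_simp
      ring
    rw [hid]
    have hinv : padicNorm p ((((c : ℚ)) + 1)⁻¹) ≤ 1 := by
      have h1 : ((c : ℚ) + 1) = ((c + 1 : ℕ) : ℚ) := by push_cast; ring
      rw [h1, norm_inv_eq (Nat.succ_pos c) (by omega)]
    apply I2_add
    · have heq : ((a : ℚ) * p * H c) * ((a : ℚ) * p * (((c : ℚ) + 1))⁻¹)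
          = (p : ℚ) ^ 2 * ((a : ℚ) * H c * ((a : ℚ) * (((c : ℚ) + 1))⁻¹)) := by ring
      rw [heq]
      exact I2_p2_mul (I1_mul (I1_mul (I1_nat a) (norm_H_le hcp)) (I1_mul (I1_nat a) hinv))
    · exact I2_mul_I1 ihc (I1_add (le_of_eq padicNorm.one)
        (I1_mul (I1_mul (I1_nat a) norm_p_le) hinv))

end Expand

end S10

theorem stmt_10 (p : ℕ) (hp : p.Prime) (hp2 : 2 < p) (i j : ℕ)
    (m k : ℕ) (hmk : m ≤ k) (hkp : k < p) :
    padicNorm p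
        (((k + (i + j) * p).choose (m + i * p) : ℚ) -
          ((i + j).choose i : ℚ) * (k.choose m : ℚ) *
            (1 + (p : ℚ) *
              (((i : ℚ) + (j : ℚ)) * H k - (j : ℚ) * H (k - m) - (i : ℚ) * H m))) ≤
      (p : ℚ)^(-2 : ℤ) := by
  haveI : Fact p.Prime := ⟨hp⟩
  obtain ⟨r, rfl⟩ := Nat.exists_eq_add_of_le hmk
  simp only [Nat.add_sub_cancel_left]
  have hmp : m < p := lt_of_le_of_lt (Nat.le_add_right m r) hkp
  have hrp : r < p := lt_of_le_of_lt (Nat.le_add_left r m) hkp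
  rw [S10.choose_eq]
  set P : ℚ := (p : ℚ) with hP
  set α : ℚ := (i : ℚ) * H m with hα
  set β : ℚ := (j : ℚ) * H r with hβ
  set γ : ℚ := ((i : ℚ) + (j : ℚ)) * H (m + r) with hγ
  set u : ℚ := S10.F p i m with hu
  set v : ℚ := S10.F p j r with hv
  set w : ℚ := S10.F p (i + j) (m + r) with hw
  set Cp : ℚ := ((((i + j) * p).choose (i * p)) : ℚ) with hCp
  set C' : ℚ := (((i + j).choose i) : ℚ) with hC'
  set Ck : ℚ := (((m + r).choose m) : ℚ) with hCk
  -- norms of casts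
  have hIα : padicNorm p α ≤ 1 := S10.I1_mul (S10.I1_nat i) (S10.norm_H_le hmp)
  have hIβ : padicNorm p β ≤ 1 := S10.I1_mul (S10.I1_nat j) (S10.norm_H_le hrp)
  have hIγ : padicNorm p γ ≤ 1 := by
    rw [hγ, show ((i : ℚ) + (j : ℚ)) = ((i + j : ℕ) : ℚ) by push_cast; ring]
    exact S10.I1_mul (S10.I1_nat (i + j)) (S10.norm_H_le hkp)
  have hIS : padicNorm p (γ - β - α) ≤ 1 := S10.I1_sub (S10.I1_sub hIγ hIβ) hIα
  -- error bounds from F_expand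
  have heu : padicNorm p (u - (1 + P * α)) ≤ (p : ℚ) ^ (-2 : ℤ) := by
    rw [show (1 + P * α) = 1 + (i : ℚ) * p * H m by rw [hP, hα]; ring]
    exact S10.F_expand hmp
  have hev : padicNorm p (v - (1 + P * β)) ≤ (p : ℚ) ^ (-2 : ℤ) := by
    rw [show (1 + P * β) = 1 + (j : ℚ) * p * H r by rw [hP, hβ]; ring]
    exact S10.F_expand hrp
  have hew : padicNorm p (w - (1 + P * γ)) ≤ (p : ℚ) ^ (-2 : ℤ) := by
    rw [show (1 + P * γ) = 1 + ((i + j : ℕ) : ℚ) * p * H (m + r) by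
      rw [hP, hγ]; push_cast; ring]
    exact S10.F_expand hkp
  -- units
  have hu1 : padicNorm p u = 1 := S10.unit_of hIα heu
  have hv1 : padicNorm p v = 1 := S10.unit_of hIβ hev
  have hw1 : padicNorm p w = 1 := S10.unit_of hIγ hew
  have hu0 : u ≠ 0 := ne_of_gt (S10.F_pos p i m)
  have hv0 : v ≠ 0 := ne_of_gt (S10.F_pos p j r)
  -- Babbage
  have hE : padicNorm p (Cp - C') ≤ (p : ℚ) ^ (-2 : ℤ) := by
    have hb := S10.babbage (p := p) (i + j) i
    have hz := (padicNorm.dvd_iff_norm_le (p := p) (n := 2)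
      (z := ((((i + j) * p).choose (i * p)) : ℤ) - (((i + j).choose i) : ℤ))).mp
      (by exact_mod_cast hb)
    rw [hCp, hC']
    push_cast at hz
    convert hz using 2
  -- key numerator bound
  have key : padicNorm p (Cp * w - C' * (1 + P * (γ - β - α)) * u * v)
      ≤ (p : ℚ) ^ (-2 : ℤ) := by
    have hid : Cp * w - C' * (1 + P * (γ - β - α)) * u * v
        = (Cp - C') * w + C' * ((w - (1 + P * γ))
          - P ^ 2 * ((γ - β - α) * α + (γ - β - α) * β + α * β + P * ((γ - β - α) * α * β))
          - (1 + P * (γ - β - α)) * ((1 + P * α) * (v - (1 + P * β))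
              + (1 + P * β) * (u - (1 + P * α))
              + (u - (1 + P * α)) * (v - (1 + P * β)))) := by ring
    rw [hid]
    have h1pS : padicNorm p (1 + P * (γ - β - α)) ≤ 1 :=
      S10.I1_add (le_of_eq padicNorm.one) (S10.I1_mul S10.norm_p_le hIS)
    have h1pα : padicNorm p (1 + P * α) ≤ 1 :=
      S10.I1_add (le_of_eq padicNorm.one) (S10.I1_mul S10.norm_p_le hIα)
    have h1pβ : padicNorm p (1 + P * β) ≤ 1 :=
      S10.I1_add (le_of_eq padicNorm.one) (S10.I1_mul S10.norm_p_le hIβ)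
    apply S10.I2_add
    · exact S10.I2_mul_I1 hE (le_of_eq hw1)
    · apply S10.I1_mul_I2 (S10.I1_nat _)
      apply S10.I2_sub
      · apply S10.I2_sub hew
        exact S10.I2_p2_mul (S10.I1_add (S10.I1_add (S10.I1_add
          (S10.I1_mul hIS hIα) (S10.I1_mul hIS hIβ)) (S10.I1_mul hIα hIβ))
          (S10.I1_mul S10.norm_p_le (S10.I1_mul (S10.I1_mul hIS hIα) hIβ)))
      · apply S10.I1_mul_I2 h1pS
        apply S10.I2_add
        · apply S10.I2_add
          · exact S10.I1_mul_I2 h1pα hev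
          · exact S10.I1_mul_I2 h1pβ heu
        · exact S10.I2_mul_I1 heu (le_trans hev S10.I2_le_one)
  -- put everything together
  have hgoal_eq : Cp * Ck * w / (u * v) - C' * Ck * (1 + P * (γ - β - α))
      = Ck * (Cp * w - C' * (1 + P * (γ - β - α)) * u * v) / (u * v) := by
    field_simp
  rw [hgoal_eq, padicNorm.div]
  have huv : padicNorm p (u * v) = 1 := by rw [padicNorm.mul, hu1, hv1]; norm_num
  rw [huv, div_one]
  exact S10.I1_mul_I2 (S10.I1_nat _) key
end

section
/- Let p > 2 be a prime, let i and j be nonnegative integers, and let k be an integer with 0 ≤ k < p. Then the sum over m from 0 to k of C(k+(i+j)p, m+ip) is congruent modulo p^2 (as rational numbers) to 2^k * C(i+j, i) * (1 + p*(i+j)*(sum over m from 1 to k of 1/(m*2^m))). -/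
/-!
Write `(a p + b)! = p ^ a * a! * F(a, b)`, where `F(a, b)` is the product of the factors prime
to `p`. Modulo `p²`, `F(a, b) ≡ (p - 1)! ^ a * b! * (1 + a p H_b)`, because `p H_{p-1} ≡ 0` for
odd `p` (pair `t` with `p - t`). Dividing factorials gives the Lucas-type congruence
`C(a p + b, c p + d) ≡ C(a, c) C(b, d) (1 + p (a H_b - c H_d - (a - c) H_{b-d}))`.
Summing over `d = m` with `a = i + j`, `b = k`, `c = i`, the symmetry `m ↔ k - m` and the
identity `∑ C(k, m) H_m = 2^k (H_k - ∑_{m ≤ k} 1 / (m 2^m))` collapse the harmonic terms.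
The congruence, proved in `ZMod (p²)`, is carried to `ℚ` by clearing the denominator `k! 2^k`,
which is prime to `p`.
-/

open Finset Nat

theorem ZMod.prod_add_of_mul_self_eq_zero {n : ℕ} {ι : Type*} (s : Finset ι) (f : ι → ZMod n)
    {x : ZMod n} (hx : x * x = 0) (hf : ∀ t ∈ s, IsUnit (f t)) :
    ∏ t ∈ s, (x + f t) = (∏ t ∈ s, f t) * (1 + x * ∑ t ∈ s, (f t)⁻¹) := by
  classical
  induction s using Finset.induction_on with
  | empty => simp
  | insert a s ha ih =>
    rw [prod_insert ha, prod_insert ha, sum_insert ha,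
      ih fun t ht ↦ hf t (mem_insert_of_mem ht)]
    have hinv := ZMod.mul_inv_of_unit _ (hf a (mem_insert_self a s))
    linear_combination
      ((∏ t ∈ s, f t) * ∑ t ∈ s, (f t)⁻¹) * hx - x * (∏ t ∈ s, f t) * hinv

-- `ZMod`'s inverse is `0` off the units: this is the harmonic number `H_b` only for `b < p`.
def harmonicZMod (n b : ℕ) : ZMod n := ∑ t ∈ range b, ((t + 1 : ℕ) : ZMod n)⁻¹

@[simp]
theorem harmonicZMod_zero (n : ℕ) : harmonicZMod n 0 = 0 :=
  sum_range_zero _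

theorem harmonicZMod_succ (n b : ℕ) :
    harmonicZMod n (b + 1) = harmonicZMod n b + ((b + 1 : ℕ) : ZMod n)⁻¹ :=
  sum_range_succ _ _

def sumInvMulHalfPowZMod (n k : ℕ) : ZMod n := ∑ m ∈ Icc 1 k, (m : ZMod n)⁻¹ * 2⁻¹ ^ m

theorem sumInvMulHalfPowZMod_succ (n k : ℕ) :
    sumInvMulHalfPowZMod n (k + 1) =
      sumInvMulHalfPowZMod n k + ((k + 1 : ℕ) : ZMod n)⁻¹ * 2⁻¹ ^ (k + 1) :=
  sum_Icc_succ_top (by omega) _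

theorem sum_range_choose_mul_inv_succ {n k : ℕ}
    (hunit : ∀ m, 0 < m → m ≤ k + 1 → IsUnit (m : ZMod n)) :
    ∑ m ∈ range (k + 1), (k.choose m : ZMod n) * ((m + 1 : ℕ) : ZMod n)⁻¹ =
      ((k + 1 : ℕ) : ZMod n)⁻¹ * (2 ^ (k + 1) - 1) := by
  have hk := ZMod.inv_mul_of_unit _ (hunit (k + 1) k.succ_pos le_rfl)
  have hterm : ∀ m ∈ range (k + 1), (k.choose m : ZMod n) * ((m + 1 : ℕ) : ZMod n)⁻¹ =
      ((k + 1 : ℕ) : ZMod n)⁻¹ * ((k + 1).choose (m + 1) : ℕ) := by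
    intro m hm
    have hm1 := ZMod.mul_inv_of_unit _
      (hunit (m + 1) m.succ_pos (by rw [mem_range] at hm; omega))
    have hpascal := congrArg (Nat.cast : ℕ → ZMod n) (add_one_mul_choose_eq k m)
    push_cast at hpascal hm1 hk ⊢
    linear_combination ((k + 1 : ZMod n)⁻¹ * (m + 1 : ZMod n)⁻¹) * hpascal
      - (k.choose m : ZMod n) * (m + 1 : ZMod n)⁻¹ * hk
      + ((k + 1 : ZMod n)⁻¹ * ((k + 1).choose (m + 1) : ℕ)) * hm1
  have hbinom := congrArg (Nat.cast : ℕ → ZMod n) (sum_range_choose (k + 1))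
  rw [sum_range_succ', choose_zero_right] at hbinom
  push_cast at hbinom
  rw [sum_congr rfl hterm, ← mul_sum]
  linear_combination ((k + 1 : ℕ) : ZMod n)⁻¹ * hbinom

theorem sum_range_choose_mul_harmonicZMod {n k : ℕ} (h2 : IsUnit (2 : ZMod n))
    (hunit : ∀ m, 0 < m → m ≤ k → IsUnit (m : ZMod n)) :
    ∑ m ∈ range (k + 1), (k.choose m : ZMod n) * harmonicZMod n m =
      2 ^ k * (harmonicZMod n k - sumInvMulHalfPowZMod n k) := by
  induction k with
  | zero => simp [sumInvMulHalfPowZMod]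
  | succ k ih =>
    have hshift :
        ∑ m ∈ range (k + 1), (k.choose (m + 1) : ZMod n) * harmonicZMod n (m + 1) =
          ∑ m ∈ range (k + 1), (k.choose m : ZMod n) * harmonicZMod n m := by
      rw [sum_range_succ, sum_range_succ' _ k]
      simp
    have hhalf : (2 : ZMod n) ^ (k + 1) * 2⁻¹ ^ (k + 1) = 1 := by
      rw [← mul_pow, ZMod.mul_inv_of_unit _ h2, one_pow]
    rw [sum_range_succ']
    simp only [choose_succ_succ', Nat.cast_add, add_mul, sum_add_distrib]
    rw [hshift]
    simp only [harmonicZMod_succ, mul_add, sum_add_distrib, sum_range_choose_mul_inv_succ hunit,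
      ih fun m hm hmk ↦ hunit m hm (by omega), harmonicZMod_zero, mul_zero, add_zero]
    rw [sumInvMulHalfPowZMod_succ]
    linear_combination ((k + 1 : ℕ) : ZMod n)⁻¹ * hhalf

theorem factorial_add_eq_mul_prod (n m : ℕ) :
    (n + m)! = n ! * ∏ t ∈ range m, (n + (t + 1)) := by
  rw [← factorial_mul_ascFactorial, ascFactorial_eq_prod_range]
  exact congrArg _ (prod_congr rfl fun t _ ↦ by ring)

variable {p : ℕ}

theorem factorial_mul_eq_mul_prod (hp : 0 < p) (a : ℕ) :
    (a * p)! = p ^ a * a ! * ∏ s ∈ range a, ∏ t ∈ range (p - 1), (s * p + (t + 1)) := by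
  induction a with
  | zero => simp
  | succ a ih =>
    obtain ⟨q, rfl⟩ : ∃ q, p = q + 1 := ⟨p - 1, by omega⟩
    rw [add_one_mul, factorial_add_eq_mul_prod, prod_range_succ, ih, prod_range_succ,
      factorial_succ, add_tsub_cancel_right]
    ring

def factorialCoprimePart (p a b : ℕ) : ℕ :=
  (∏ s ∈ range a, ∏ t ∈ range (p - 1), (s * p + (t + 1))) *
    ∏ t ∈ range b, (a * p + (t + 1))

theorem factorial_mul_add_eq (hp : 0 < p) (a b : ℕ) :
    (a * p + b)! = p ^ a * a ! * factorialCoprimePart p a b := by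
  rw [factorial_add_eq_mul_prod, factorial_mul_eq_mul_prod hp, factorialCoprimePart]
  ring

theorem choose_mul_factorialCoprimePart (hp : 0 < p) {a b c d : ℕ} (hca : c ≤ a)
    (hdb : d ≤ b) :
    (a * p + b).choose (c * p + d) *
        (factorialCoprimePart p c d * factorialCoprimePart p (a - c) (b - d)) =
      a.choose c * factorialCoprimePart p a b := by
  obtain ⟨a, rfl⟩ := Nat.exists_eq_add_of_le hca
  obtain ⟨b, rfl⟩ := Nat.exists_eq_add_of_le hdb
  have hle : c * p + d ≤ (c + a) * p + (d + b) := by nlinarith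
  have hsub : (c + a) * p + (d + b) - (c * p + d) = a * p + b := by
    rw [add_mul]; omega
  have hn := Nat.choose_mul_factorial_mul_factorial hle
  rw [hsub, factorial_mul_add_eq hp, factorial_mul_add_eq hp, factorial_mul_add_eq hp,
    ← Nat.choose_mul_factorial_mul_factorial (Nat.le_add_right c a), add_tsub_cancel_left,
    pow_add] at hn
  rw [add_tsub_cancel_left, add_tsub_cancel_left]
  refine Nat.eq_of_mul_eq_mul_left (by positivity : 0 < p ^ c * p ^ a * c ! * a !) ?_
  linear_combination hn

theorem ZMod.isUnit_natCast_of_pos_of_lt (hp : p.Prime) {n t : ℕ} (hn : 0 < n) (ht0 : 0 < t)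
    (htp : t < p) : IsUnit (t : ZMod (p ^ n)) :=
  (ZMod.isUnit_natCast_iff_not_dvd_pow hp hn).mpr (Nat.not_dvd_of_pos_of_lt ht0 htp)

theorem ZMod.isUnit_two_of_ne_two (hp : p.Prime) (hp2 : p ≠ 2) : IsUnit (2 : ZMod (p ^ 2)) := by
  exact_mod_cast isUnit_natCast_of_pos_of_lt hp two_pos two_pos (by have := hp.two_le; omega)

theorem ZMod.natCast_mul_self_eq_zero (p : ℕ) : (p : ZMod (p ^ 2)) * p = 0 := by
  rw [← pow_two, ← Nat.cast_pow, ZMod.natCast_self]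

theorem prod_range_natCast_mul_add_succ (hp : p.Prime) (a : ℕ) {b : ℕ} (hb : b < p) :
    ∏ t ∈ range b, ((a * p + (t + 1) : ℕ) : ZMod (p ^ 2)) =
      (b ! : ZMod (p ^ 2)) * (1 + (a * p : ZMod (p ^ 2)) * harmonicZMod (p ^ 2) b) := by
  push_cast [← prod_range_add_one_eq_factorial, harmonicZMod]
  refine ZMod.prod_add_of_mul_self_eq_zero _ _ ?_ fun t ht ↦ ?_
  · linear_combination (a : ZMod (p ^ 2)) ^ 2 * ZMod.natCast_mul_self_eq_zero p
  · exact_mod_cast ZMod.isUnit_natCast_of_pos_of_lt hp two_pos (by omega)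
      (by rw [mem_range] at ht; omega)

theorem natCast_mul_harmonicZMod_pred (hp : p.Prime) (hp2 : p ≠ 2) :
    (p : ZMod (p ^ 2)) * harmonicZMod (p ^ 2) (p - 1) = 0 := by
  rw [harmonicZMod, mul_sum]
  refine sum_involution (fun t _ ↦ p - 2 - t) (fun t ht ↦ ?_) (fun t ht _ h ↦ ?_)
    (fun t ht ↦ ?_) (fun t ht ↦ ?_)
  · rw [mem_range] at ht
    have hu := ZMod.mul_inv_of_unit _
      (ZMod.isUnit_natCast_of_pos_of_lt hp two_pos (by omega) (show t + 1 < p by omega))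
    have hv := ZMod.mul_inv_of_unit _
      (ZMod.isUnit_natCast_of_pos_of_lt hp two_pos (by omega) (show p - 2 - t + 1 < p by omega))
    have hsum : ((t + 1 : ℕ) : ZMod (p ^ 2)) + ((p - 2 - t + 1 : ℕ) : ZMod (p ^ 2)) = p := by
      rw [← Nat.cast_add]; congr 1; omega
    set u := ((t + 1 : ℕ) : ZMod (p ^ 2))
    set v := ((p - 2 - t + 1 : ℕ) : ZMod (p ^ 2))
    -- `u + v = p` gives `p (u⁻¹ + v⁻¹) = p² u⁻¹ v⁻¹ = 0`
    linear_combination (p * u⁻¹ * v⁻¹ : ZMod (p ^ 2)) * hsum - (p * v⁻¹ : ZMod (p ^ 2)) * hu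
      - (p * u⁻¹ : ZMod (p ^ 2)) * hv + u⁻¹ * v⁻¹ * ZMod.natCast_mul_self_eq_zero p
  · rw [mem_range] at ht
    have := hp.eq_one_or_self_of_dvd 2 ⟨t + 1, by omega⟩
    omega
  · rw [mem_range] at ht ⊢; omega
  · rw [mem_range] at ht; omega

theorem natCast_factorialCoprimePart (hp : p.Prime) (hp2 : p ≠ 2) (a : ℕ) {b : ℕ}
    (hb : b < p) :
    (factorialCoprimePart p a b : ZMod (p ^ 2)) =
      ((p - 1)! : ZMod (p ^ 2)) ^ a * (b ! : ZMod (p ^ 2)) *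
        (1 + (a * p : ZMod (p ^ 2)) * harmonicZMod (p ^ 2) b) := by
  have hblock (s : ℕ) : ∏ t ∈ range (p - 1), ((s * p + (t + 1) : ℕ) : ZMod (p ^ 2)) =
      ((p - 1)! : ZMod (p ^ 2)) := by
    rw [prod_range_natCast_mul_add_succ hp s (by omega)]
    linear_combination ((p - 1)! * s : ZMod (p ^ 2)) * natCast_mul_harmonicZMod_pred hp hp2
  simp only [factorialCoprimePart, Nat.cast_mul, Nat.cast_prod, hblock, prod_const, card_range,
    prod_range_natCast_mul_add_succ hp a hb]
  ring

theorem natCast_choose_mul_add_mul_add (hp : p.Prime) (hp2 : p ≠ 2) {a b c d : ℕ}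
    (hca : c ≤ a) (hdb : d ≤ b) (hb : b < p) :
    ((a * p + b).choose (c * p + d) : ZMod (p ^ 2)) =
      (a.choose c * b.choose d : ZMod (p ^ 2)) * (1 + (p : ZMod (p ^ 2)) *
        ((a : ZMod (p ^ 2)) * harmonicZMod (p ^ 2) b
          - (c : ZMod (p ^ 2)) * harmonicZMod (p ^ 2) d
          - ((a - c : ℕ) : ZMod (p ^ 2)) * harmonicZMod (p ^ 2) (b - d))) := by
  have h := congrArg (Nat.cast : ℕ → ZMod (p ^ 2))
    (choose_mul_factorialCoprimePart hp.pos hca hdb)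
  simp only [Nat.cast_mul] at h
  rw [natCast_factorialCoprimePart hp hp2 _ (by omega),
    natCast_factorialCoprimePart hp hp2 _ (by omega), natCast_factorialCoprimePart hp hp2 _ hb,
    ← Nat.choose_mul_factorial_mul_factorial hdb] at h
  have hunit : IsUnit (((p - 1)! : ZMod (p ^ 2)) ^ a * (d ! * (b - d)! : ℕ)) := by
    refine (IsUnit.pow _ ?_).mul ?_ <;>
      simp only [ZMod.isUnit_natCast_iff_not_dvd_pow hp two_pos, hp.dvd_mul, hp.dvd_factorial] <;>
      omega
  set π := ((p - 1)! : ZMod (p ^ 2))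
  have hpow : π ^ c * π ^ (a - c) = π ^ a := by rw [← pow_add, Nat.add_sub_cancel' hca]
  set X := (c : ZMod (p ^ 2)) * harmonicZMod (p ^ 2) d
  set Y := ((a - c : ℕ) : ZMod (p ^ 2)) * harmonicZMod (p ^ 2) (b - d)
  set Z := (a : ZMod (p ^ 2)) * harmonicZMod (p ^ 2) b
  set C := ((a * p + b).choose (c * p + d) : ZMod (p ^ 2))
  set K := (a.choose c * b.choose d : ZMod (p ^ 2))
  have hcancel : C * (1 + p * X) * (1 + p * Y) = K * (1 + p * Z) := by
    refine hunit.mul_right_cancel ?_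
    push_cast at h ⊢
    linear_combination h - C * (1 + p * X) * (1 + p * Y) * (d ! : ZMod (p ^ 2)) *
      ((b - d)! : ZMod (p ^ 2)) * hpow
  -- invert `1 + p X` and `1 + p Y` to first order, using `p² = 0`
  linear_combination (1 - p * X) * (1 - p * Y) * hcancel
    + (C * (X ^ 2 + Y ^ 2 - p * p * X ^ 2 * Y ^ 2) + K * (X * Y - Z * X - Z * Y + p * Z * X * Y))
      * ZMod.natCast_mul_self_eq_zero p

theorem sum_range_natCast_choose_add_mul (hp : p.Prime) (hp2 : p ≠ 2) (i j : ℕ) {k : ℕ}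
    (hk : k < p) :
    ∑ m ∈ range (k + 1), ((k + (i + j) * p).choose (m + i * p) : ZMod (p ^ 2)) =
      2 ^ k * ((i + j).choose i : ZMod (p ^ 2)) *
        (1 + (p : ZMod (p ^ 2)) * ((i + j : ℕ) : ZMod (p ^ 2)) *
          sumInvMulHalfPowZMod (p ^ 2) k) := by
  set H := harmonicZMod (p ^ 2)
  set N := ((i + j).choose i : ZMod (p ^ 2))
  have hterm (m : ℕ) (hm : m ∈ range (k + 1)) :
      ((k + (i + j) * p).choose (m + i * p) : ZMod (p ^ 2)) =
        N * (1 + (p : ZMod (p ^ 2)) * ((i + j : ℕ) : ZMod (p ^ 2)) * H k) * (k.choose m : ℕ)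
          - (N * p * i) * ((k.choose m : ℕ) * H m)
          - (N * p * j) * ((k.choose m : ℕ) * H (k - m)) := by
    rw [mem_range] at hm
    rw [add_comm k, add_comm m, natCast_choose_mul_add_mul_add hp hp2 (by omega) (by omega) hk,
      Nat.add_sub_cancel_left]
    ring
  have hreflect : ∑ m ∈ range (k + 1), (k.choose m : ZMod (p ^ 2)) * H (k - m) =
      ∑ m ∈ range (k + 1), (k.choose m : ZMod (p ^ 2)) * H m := by
    rw [← sum_range_reflect]
    refine sum_congr rfl fun m hm ↦ ?_
    rw [mem_range] at hm
    rw [add_tsub_cancel_right, choose_symm (by omega), Nat.sub_sub_self (by omega)]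
  have hbinom : ∑ m ∈ range (k + 1), (k.choose m : ZMod (p ^ 2)) = 2 ^ k := by
    exact_mod_cast congrArg (Nat.cast : ℕ → ZMod (p ^ 2)) (sum_range_choose k)
  have hW := sum_range_choose_mul_harmonicZMod (k := k) (ZMod.isUnit_two_of_ne_two hp hp2)
    fun m hm hmk ↦ ZMod.isUnit_natCast_of_pos_of_lt hp two_pos hm (by omega)
  rw [sum_congr rfl hterm, sum_sub_distrib, sum_sub_distrib, ← mul_sum, ← mul_sum, ← mul_sum,
    hreflect, hbinom, hW]
  push_cast
  ring

theorem natCast_sum_factorial_div_mul_two_pow {R : Type*} [CommRing R] {k : ℕ} {u : ℕ → R}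
    {w : R} (hu : ∀ m ∈ Icc 1 k, (m : R) * u m = 1) (hw : 2 * w = 1) :
    ((∑ m ∈ Icc 1 k, k ! / m * 2 ^ (k - m) : ℕ) : R) =
      k ! * 2 ^ k * ∑ m ∈ Icc 1 k, u m * w ^ m := by
  push_cast [mul_sum]
  refine sum_congr rfl fun m hm ↦ ?_
  have hmu := hu m hm
  rw [mem_Icc] at hm
  have hdiv : ((k ! / m : ℕ) : R) * m = k ! := by
    rw [← Nat.cast_mul, Nat.div_mul_cancel (dvd_factorial hm.1 hm.2)]
  have hpow : (2 : R) ^ (k - m) * 2 ^ m = 2 ^ k := by rw [← pow_add, Nat.sub_add_cancel hm.2]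
  have hwm : (2 * w) ^ m = 1 := by rw [hw, one_pow]
  set q := ((k ! / m : ℕ) : R)
  linear_combination -(q * 2 ^ (k - m) * (2 * w) ^ m) * hmu - q * 2 ^ (k - m) * hwm
    + q * m * u m * w ^ m * hpow + 2 ^ k * u m * w ^ m * hdiv

theorem natCast_sum_factorial_div_mul_two_pow_eq_rat (k : ℕ) :
    ((∑ m ∈ Icc 1 k, k ! / m * 2 ^ (k - m) : ℕ) : ℚ) =
      k ! * 2 ^ k * ∑ m ∈ Icc 1 k, 1 / ((m : ℚ) * 2 ^ m) := by
  rw [natCast_sum_factorial_div_mul_two_pow (u := fun m ↦ (m : ℚ)⁻¹) (w := 2⁻¹)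
    (fun m hm ↦ mul_inv_cancel₀ (by rw [mem_Icc] at hm; exact_mod_cast (by omega : m ≠ 0)))
    (by norm_num)]
  simp only [one_div, mul_inv, inv_pow]

theorem natCast_sum_factorial_div_mul_two_pow_eq_zmod (hp : p.Prime) (hp2 : p ≠ 2) {k : ℕ}
    (hk : k < p) :
    ((∑ m ∈ Icc 1 k, k ! / m * 2 ^ (k - m) : ℕ) : ZMod (p ^ 2)) =
      (k ! : ZMod (p ^ 2)) * 2 ^ k * sumInvMulHalfPowZMod (p ^ 2) k := by
  refine natCast_sum_factorial_div_mul_two_pow (fun m hm ↦ ZMod.mul_inv_of_unit _ ?_)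
    (ZMod.mul_inv_of_unit _ (ZMod.isUnit_two_of_ne_two hp hp2))
  rw [mem_Icc] at hm
  exact ZMod.isUnit_natCast_of_pos_of_lt hp two_pos (by omega) (by omega)

theorem not_dvd_factorial_mul_two_pow (hp : p.Prime) (hp2 : p ≠ 2) {k : ℕ} (hk : k < p) :
    ¬ p ∣ k ! * 2 ^ k := by
  rw [hp.dvd_mul, hp.dvd_factorial, not_or, not_le]
  exact ⟨hk, fun h ↦ hp2 <| (prime_dvd_prime_iff_eq hp prime_two).mp (hp.dvd_of_dvd_pow h)⟩

theorem padicNorm_sub_div_le_of_natCast_eq [Fact p.Prime] {n A B D : ℕ} (hD : ¬ p ∣ D)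
    (h : (A : ZMod (p ^ n)) = B) :
    padicNorm p (((A : ℚ) - B) / D) ≤ (p : ℚ) ^ (-n : ℤ) := by
  rw [padicNorm.div, (padicNorm.nat_eq_one_iff D).mpr hD, div_one]
  have hdvd : ((p ^ n : ℕ) : ℤ) ∣ (A : ℤ) - B :=
    (ZMod.intCast_zmod_eq_zero_iff_dvd _ _).mp (by push_cast; rw [h, sub_self])
  exact_mod_cast padicNorm.dvd_iff_norm_le.mp hdvd

theorem stmt_11 (p : ℕ) (hp : p.Prime) (hp2 : 2 < p) (i j : ℕ)
    (k : ℕ) (hkp : k < p) :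
    padicNorm p
        ((∑ m ∈ Finset.range (k + 1), ((k + (i + j) * p).choose (m + i * p) : ℚ)) -
          2^k * ((i + j).choose i : ℚ) *
            (1 + (p : ℚ) * ((i : ℚ) + (j : ℚ)) *
              ∑ m ∈ Finset.Icc 1 k, 1 / ((m : ℚ) * 2^m))) ≤
      (p : ℚ)^(-2 : ℤ) := by
  have := Fact.mk hp
  set D := k ! * 2 ^ k
  set T := ∑ m ∈ Icc 1 k, k ! / m * 2 ^ (k - m)
  have hcongr :
      ((D * ∑ m ∈ range (k + 1), (k + (i + j) * p).choose (m + i * p) : ℕ) : ZMod (p ^ 2)) =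
        ((2 ^ k * (i + j).choose i * (D + p * (i + j) * T) : ℕ) : ZMod (p ^ 2)) := by
    have hT : (T : ZMod (p ^ 2)) = _ :=
      natCast_sum_factorial_div_mul_two_pow_eq_zmod hp hp2.ne' hkp
    push_cast [D, hT, sum_range_natCast_choose_add_mul hp hp2.ne' i j hkp]
    ring
  convert padicNorm_sub_div_le_of_natCast_eq (not_dvd_factorial_mul_two_pow hp hp2.ne' hkp)
    hcongr using 2
  · have hT : (T : ℚ) = _ := natCast_sum_factorial_div_mul_two_pow_eq_rat k
    push_cast [D, hT]
    field_simp
  · norm_num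
end

section
/- Let p > 2 be a prime. Then the sum over all triples (m1, m2, m3) of nonnegative integers with m1+m2+m3 < p of the square of the multinomial coefficient (m1+m2+m3)!/(m1! m2! m3!) times (H_{m1+m2+m3} - H_{m1}) is congruent to 0 modulo p (as rational numbers, i.e., its p-adic valuation is at least 1). -/
/-- The multinomial coefficient (a+b+c)! / (a! b! c!). -/
def multinomial3 (a b c : ℕ) : ℕ :=
  (a + b + c).factorial / (a.factorial * b.factorial * c.factorial)

open Finset Nat

theorem multinomial3_eq_choose_mul_choose (a b c : ℕ) :
    multinomial3 a b c = (a + (b + c)).choose (b + c) * (b + c).choose c := by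
  refine Nat.div_eq_of_eq_mul_left (by positivity) ?_
  rw [add_assoc, ← add_choose_mul_factorial_mul_factorial a (b + c),
    ← add_choose_mul_factorial_mul_factorial b c]
  ring

theorem ZMod.choose_sub_one_sub {p : ℕ} [Fact p.Prime] {a m : ℕ} (h : a + m < p) :
    ((p - 1 - a).choose m : ZMod p) = (-1) ^ m * ((a + m).choose m : ZMod p) := by
  have hm : (m ! : ZMod p) ≠ 0 := by
    rw [Ne, ZMod.natCast_eq_zero_iff, (Fact.out : p.Prime).dvd_factorial]
    omega
  have hneg := prod_neg (s := range m) fun i ↦ ((a + 1 + i : ℕ) : ZMod p)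
  rw [card_range] at hneg
  refine mul_left_cancel₀ hm ?_
  rw [mul_left_comm, ← Nat.cast_mul, ← Nat.cast_mul, ← descFactorial_eq_factorial_mul_choose,
    ← ascFactorial_eq_factorial_mul_choose, descFactorial_eq_prod_range,
    ascFactorial_eq_prod_range, Nat.cast_prod, Nat.cast_prod, ← hneg]
  refine prod_congr rfl fun k hk ↦ ?_
  have hk : a + 1 + k + (p - 1 - a - k) = p := by rw [mem_range] at hk; omega
  have := congrArg (Nat.cast : ℕ → ZMod p) hk
  push_cast [ZMod.natCast_self] at this ⊢
  linear_combination this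

theorem ZMod.multinomial3_sub_one_sub {p : ℕ} [Fact p.Prime] {a b c : ℕ} (h : a + b + c < p) :
    (multinomial3 (p - 1 - (a + b + c)) b c : ZMod p) = (-1) ^ (b + c) * multinomial3 a b c := by
  have hsum : p - 1 - (a + b + c) + (b + c) = p - 1 - a := by omega
  rw [multinomial3_eq_choose_mul_choose, multinomial3_eq_choose_mul_choose, hsum, Nat.cast_mul,
    Nat.cast_mul, ZMod.choose_sub_one_sub (by omega), mul_assoc]

def sumSqMultinomialStraddling (p j : ℕ) : ℕ :=
  ∑ m1 ∈ range p, ∑ m2 ∈ range p, ∑ m3 ∈ range p,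
    if m1 < j ∧ j ≤ m1 + m2 + m3 ∧ m1 + m2 + m3 < p then multinomial3 m1 m2 m3 ^ 2 else 0

theorem ZMod.natCast_sumSqMultinomialStraddling_sub {p j : ℕ} [Fact p.Prime] (hj : j ≤ p) :
    (sumSqMultinomialStraddling p (p - j) : ZMod p) = sumSqMultinomialStraddling p j := by
  have inner (m2 m3 : ℕ) :
      ∑ m1 ∈ range p, (if m1 < p - j ∧ p - j ≤ m1 + m2 + m3 ∧ m1 + m2 + m3 < p
        then (multinomial3 m1 m2 m3 : ZMod p) ^ 2 else 0) =
      ∑ m1 ∈ range p, (if m1 < j ∧ j ≤ m1 + m2 + m3 ∧ m1 + m2 + m3 < p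
        then (multinomial3 m1 m2 m3 : ZMod p) ^ 2 else 0) := by
    rw [← sum_filter, ← sum_filter]
    refine sum_nbij' (fun a ↦ p - 1 - (a + m2 + m3)) (fun a ↦ p - 1 - (a + m2 + m3))
      ?_ ?_ ?_ ?_ fun a ha ↦ ?_
    any_goals intro a ha; simp only [mem_filter, mem_range] at ha ⊢; omega
    rw [mem_filter, mem_range] at ha
    rw [ZMod.multinomial3_sub_one_sub ha.2.2.2, mul_pow, ← pow_mul, pow_mul', neg_one_sq, one_pow,
      one_mul]
  unfold sumSqMultinomialStraddling
  push_cast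
  rw [sum_comm]; conv_rhs => rw [sum_comm]
  refine sum_congr rfl fun m2 _ ↦ ?_
  rw [sum_comm]; conv_rhs => rw [sum_comm]
  exact sum_congr rfl fun m3 _ ↦ inner m2 m3

theorem H_sub_H {m n : ℕ} (h : m ≤ n) : H n - H m = ∑ j ∈ Ioc m n, 1 / (j : ℚ) := by
  rw [H, H, ← sum_Ico_eq_sub _ h, ← Ico_succ_succ_eq_Ioc, Order.succ_eq_add_one,
    Order.succ_eq_add_one, ← sum_Ico_add']
  push_cast
  rfl

theorem sum_sq_multinomial3_mul_H_sub_H (p : ℕ) :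
    ∑ m1 ∈ range p, ∑ m2 ∈ range p, ∑ m3 ∈ range p,
      (if m1 + m2 + m3 < p then (multinomial3 m1 m2 m3 : ℚ) ^ 2 * (H (m1 + m2 + m3) - H m1)
        else 0) =
    ∑ j ∈ Ioo 0 p, (sumSqMultinomialStraddling p j : ℚ) / j := by
  have term (m1 n : ℕ) (hn : m1 ≤ n) (x : ℚ) :
      (if n < p then x * (H n - H m1) else 0) =
        ∑ j ∈ Ioo 0 p, if m1 < j ∧ j ≤ n ∧ n < p then x / j else 0 := by
    by_cases hnp : n < p
    · rw [if_pos hnp, H_sub_H hn, mul_sum, ← sum_filter]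
      refine sum_congr ?_ fun j _ ↦ mul_one_div x j
      ext j
      simp only [mem_Ioc, mem_filter, mem_Ioo]
      omega
    · simp [hnp]
  simp only [sumSqMultinomialStraddling, Nat.cast_sum, Nat.cast_ite, Nat.cast_pow, Nat.cast_zero,
    sum_div, ite_div, zero_div]
  simp only [fun m1 m2 m3 ↦ term m1 (m1 + m2 + m3) (by omega)]
  simp only [sum_comm (s := range p) (t := Ioo 0 p)]

theorem sum_Ioo_zero_reflect {M : Type*} [AddCommMonoid M] (f : ℕ → M) (n : ℕ) :
    ∑ j ∈ Ioo 0 n, f (n - j) = ∑ j ∈ Ioo 0 n, f j := by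
  refine sum_nbij' (n - ·) (n - ·) ?_ ?_ ?_ ?_ fun _ _ ↦ rfl
  all_goals intro j hj; simp only [mem_Ioo] at hj ⊢; omega

theorem padicNorm_div_add_div_le {p : ℕ} [Fact p.Prime] {x y j k : ℕ} (hxy : (x : ZMod p) = y)
    (hjk : p ∣ j + k) (hj : ¬ p ∣ j) (hk : ¬ p ∣ k) :
    padicNorm p (x / j + y / k) ≤ (p : ℚ)⁻¹ := by
  have hnum : p ∣ x * k + y * j := by
    rw [← ZMod.natCast_eq_zero_iff] at hjk ⊢
    push_cast at hjk ⊢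
    linear_combination (x : ZMod p) * hjk - (j : ZMod p) * hxy
  have hden : padicNorm p ((j * k : ℕ) : ℚ) = 1 :=
    (padicNorm.nat_eq_one_iff _).mpr fun h ↦ ((Fact.out : p.Prime).dvd_mul.mp h).elim hj hk
  have hj0 : (j : ℚ) ≠ 0 := by rintro h; exact hj (by simp [Nat.cast_eq_zero.mp h])
  have hk0 : (k : ℚ) ≠ 0 := by rintro h; exact hk (by simp [Nat.cast_eq_zero.mp h])
  have hnorm := (padicNorm.dvd_iff_norm_le (p := p) (n := 1) (z := (x * k + y * j : ℕ))).mp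
    (by rw [pow_one]; exact Int.natCast_dvd_natCast.mpr hnum)
  rw [div_add_div _ _ hj0 hk0,
    show (x : ℚ) * k + j * y = ((x * k + y * j : ℕ) : ℚ) by push_cast; ring,
    show (j : ℚ) * k = ((j * k : ℕ) : ℚ) by push_cast; ring, padicNorm.div, hden, div_one]
  simpa using hnorm

theorem stmt_13 (p : ℕ) (hp : p.Prime) (hp2 : 2 < p) :
    padicNorm p
        (∑ m1 ∈ Finset.range p, ∑ m2 ∈ Finset.range p, ∑ m3 ∈ Finset.range p,
          if m1 + m2 + m3 < p then
            (multinomial3 m1 m2 m3 : ℚ)^2 * (H (m1 + m2 + m3) - H m1)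
          else 0) ≤ ((p : ℚ))⁻¹ := by
  have := Fact.mk hp
  rw [sum_sq_multinomial3_mul_H_sub_H]
  set f : ℕ → ℚ := fun j ↦ (sumSqMultinomialStraddling p j : ℚ) / j
  have hpair (j : ℕ) (hj : j ∈ Ioo 0 p) : padicNorm p (f j + f (p - j)) ≤ (p : ℚ)⁻¹ := by
    rw [mem_Ioo] at hj
    exact padicNorm_div_add_div_le (ZMod.natCast_sumSqMultinomialStraddling_sub hj.2.le).symm
      ⟨1, by omega⟩ (not_dvd_of_pos_of_lt hj.1 hj.2) (not_dvd_of_pos_of_lt (by omega) (by omega))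
  have htwice : padicNorm p (2 * ∑ j ∈ Ioo 0 p, f j) ≤ (p : ℚ)⁻¹ := by
    rw [two_mul]
    nth_rw 2 [← sum_Ioo_zero_reflect]
    rw [← sum_add_distrib]
    exact padicNorm.sum_le' hpair (by positivity)
  have htwo : padicNorm p 2 = 1 := by
    exact_mod_cast (padicNorm.nat_eq_one_iff 2).mpr (not_dvd_of_pos_of_lt two_pos hp2)
  rwa [padicNorm.mul, htwo, one_mul] at htwice
end

section
/- Let p > 2 be a prime and let c be an integer with (p-1)/2 < c ≤ p-1. Then the sum over a from 0 to c of C(p-1-a, c-a)^2, plus the central binomial coefficient C(2c, c), is congruent to 0 modulo p^2. -/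
/-!
Write `c = m + r + 1` and `p = 2m + r + 2`. Vandermonde-type identities turn both terms into
integer combinations of the binomials `C(p, m + k + 1)`, which are divisible by `p`:
`∑_{n < p} C(n, m)² = ∑_k C(m, k) C(m + k, m) C(p, m + k + 1)` and
`C(p + r, m + 1 + r) = ∑_k C(r, k) C(p, m + k + 1)`.
Since `C(p, j + 1) / p ≡ (-1)^j / (j + 1) (mod p)`, the quotient by `p` is, up to the sign `(-1)^m`,
the sum of two discrete beta integrals,
`∑_k (-1)^k C(m, k) C(m + k, m) / (m + k + 1) = (-1)^m m!² / (2m + 1)!` (the moment `∫₀¹ xᵐ Pₘ`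
of the shifted Legendre polynomial) and `∑_k (-1)^k C(r, k) / (m + k + 1) = r! m! / (m + r + 1)!`.
Wilson's theorem in the form `k! (p - 1 - k)! ≡ (-1)^(k + 1)` makes these cancel modulo `p`.
-/

open Finset Nat

namespace Nat

theorem choose_add_left_eq_sum (m n : ℕ) :
    (m + n).choose m = ∑ j ∈ range (m + 1), m.choose j * n.choose j := by
  rw [add_choose_eq, Finset.Nat.sum_antidiagonal_eq_sum_range_succ_mk, ← sum_range_reflect]
  refine sum_congr rfl fun j hj => ?_
  rw [mem_range] at hj
  dsimp only
  rw [succ_sub_one, choose_symm (by omega), Nat.sub_sub_self (by omega)]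

theorem sum_range_choose_eq_choose_succ (N j : ℕ) :
    ∑ n ∈ range N, n.choose j = N.choose (j + 1) := by
  induction N with
  | zero => simp
  | succ N ih => rw [sum_range_succ, ih, choose_succ_succ', add_comm]

theorem choose_sq_eq_sum (n m : ℕ) :
    n.choose m ^ 2 = ∑ k ∈ range (m + 1), m.choose k * (m + k).choose m * n.choose (m + k) := by
  rcases lt_or_ge n m with hnm | hmn
  · simp [choose_eq_zero_of_lt hnm, choose_eq_zero_of_lt (hnm.trans_le (le_add_right m _))]
  calc n.choose m ^ 2 = n.choose m * ∑ k ∈ range (m + 1), m.choose k * (n - m).choose k := by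
        rw [sq, ← choose_add_left_eq_sum, Nat.add_sub_cancel' hmn]
    _ = _ := by
        rw [mul_sum]
        refine sum_congr rfl fun k _ => ?_
        rw [mul_assoc, mul_comm ((m + k).choose m), choose_mul (le_add_right m k),
          add_tsub_cancel_left]
        ring

theorem sum_range_choose_sq_eq_sum (N m : ℕ) :
    ∑ n ∈ range N, n.choose m ^ 2 =
      ∑ k ∈ range (m + 1), m.choose k * (m + k).choose m * N.choose (m + k + 1) := by
  simp_rw [choose_sq_eq_sum _ m, sum_comm (s := range N), ← mul_sum,
    sum_range_choose_eq_choose_succ]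

theorem add_choose_add_eq_sum (n r s : ℕ) :
    (n + r).choose (s + r) = ∑ k ∈ range (r + 1), r.choose k * n.choose (s + k) := by
  rw [add_comm n, add_choose_eq, Finset.Nat.sum_antidiagonal_eq_sum_range_succ_mk,
    ← sum_subset (range_subset_range.2 (by omega : r + 1 ≤ s + r + 1)), ← sum_range_reflect]
  · refine sum_congr rfl fun k hk => ?_
    rw [mem_range] at hk
    dsimp only
    rw [add_tsub_cancel_right, choose_symm (by omega)]
    congr 2
    omega
  · intro j _ hj
    rw [mem_range, not_lt] at hj
    simp [choose_eq_zero_of_lt (show r < j by omega)]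

theorem sum_range_sub_choose_sub_sq {N c : ℕ} (hc : c ≤ N) :
    ∑ a ∈ range (c + 1), (N - a).choose (c - a) ^ 2 =
      ∑ n ∈ range (N + 1), n.choose (N - c) ^ 2 := by
  rw [← sum_range_reflect (fun n => n.choose (N - c) ^ 2),
    ← sum_subset (range_subset_range.2 (by omega : c + 1 ≤ N + 1))]
  · refine sum_congr rfl fun a ha => ?_
    rw [mem_range] at ha
    rw [add_tsub_cancel_right, choose_symm_of_eq_add (show N - a = c - a + (N - c) by omega)]
  · intro a haN ha
    rw [mem_range] at haN ha
    rw [add_tsub_cancel_right, choose_eq_zero_of_lt (by omega : N - a < N - c), zero_pow two_ne_zero]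

theorem choose_sq_mul_factorial_mul_factorial {m j : ℕ} (hj : j ≤ m) :
    m.choose j ^ 2 * ((m - j)! * (m + j)!) = m.choose j * (m + j).choose m * m ! ^ 2 := by
  refine Nat.eq_of_mul_eq_mul_right (factorial_pos j) ?_
  rw [choose_symm_add, ← add_choose_mul_factorial_mul_factorial m j]
  calc _ = m.choose j * (m + j).choose j * m ! * j ! * (m.choose j * j ! * (m - j)!) := by ring
    _ = _ := by rw [choose_mul_factorial_mul_factorial hj]; ring

end Nat

theorem sum_choose_mul_choose_mul {R : Type*} [CommSemiring R] {m j : ℕ} (hj : j ≤ m)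
    (f : ℕ → R) :
    ∑ k ∈ range (m + 1), (m.choose k * k.choose j : R) * f k =
      m.choose j * ∑ t ∈ range (m - j + 1), ((m - j).choose t : R) * f (j + t) := by
  rw [show m + 1 = j + (m - j + 1) by omega, sum_range_add, mul_sum,
    sum_eq_zero fun k hk => by rw [choose_eq_zero_of_lt (mem_range.1 hk)]; simp, zero_add]
  refine sum_congr rfl fun t _ => ?_
  have h : (m.choose (j + t) * (j + t).choose j : R) = m.choose j * (m - j).choose t := by
    rw [← cast_mul, ← cast_mul, choose_mul (le_add_right j t), add_tsub_cancel_left]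
  rw [h, mul_assoc]

theorem sum_range_succ_alternating_choose_succ {R : Type*} [CommRing R] (r : ℕ) (g : ℕ → R) :
    ∑ k ∈ range (r + 2), (-1) ^ k * ((r + 1).choose k : R) * g k =
      ∑ k ∈ range (r + 1), (-1) ^ k * (r.choose k : R) * (g k - g (k + 1)) := by
  have hr : ∑ k ∈ range (r + 2), (-1) ^ k * (r.choose k : R) * g k =
      ∑ k ∈ range (r + 1), (-1) ^ k * (r.choose k : R) * g k := by
    rw [sum_range_succ, choose_succ_self, cast_zero, mul_zero, zero_mul, add_zero]
  simp only [mul_sub, sum_sub_distrib, ← hr]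
  rw [sum_range_succ', sum_range_succ' _ (r + 1)]
  simp only [choose_succ_succ', cast_add, pow_succ, mul_add, add_mul, sum_add_distrib, mul_neg,
    mul_one, neg_mul, sum_neg_distrib, pow_zero, choose_zero_right, cast_one, one_mul]
  ring

theorem sum_alternating_choose_mul_choose_add (m : ℕ) :
    ∑ k ∈ range (m + 1), (-1 : ℤ) ^ k * (m.choose k * (m + k).choose m) = (-1) ^ m := by
  have h := Polynomial.shiftedLegendre_eval_symm m (1 : ℤ)
  rw [sub_self, ← Polynomial.coeff_zero_eq_aeval_zero, Polynomial.coeff_shiftedLegendre] at h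
  simpa [Polynomial.shiftedLegendre, Polynomial.aeval_def, Polynomial.eval₂_finsetSum,
    mul_assoc] using h

section Field

variable {K : Type*} [Field K]

theorem sum_alternating_choose_div (r a : ℕ) (h : ((a + r + 1)! : K) ≠ 0) :
    ∑ k ∈ range (r + 1), (-1) ^ k * (r.choose k : K) / (a + k + 1) =
      r ! * a ! / (a + r + 1)! := by
  induction r generalizing a with
  | zero =>
    rw [factorial_succ, cast_mul] at h ⊢
    obtain ⟨ha, ha'⟩ := mul_ne_zero_iff.1 h
    simp only [zero_add, range_one, sum_singleton, pow_zero, choose_self, cast_one, cast_zero,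
      add_zero, factorial_zero, one_mul, cast_add]
    field_simp
  | succ r ih =>
    rw [show a + (r + 1) + 1 = a + r + 1 + 1 by ring] at h ⊢
    obtain ⟨hd, hF⟩ : ((a + r + 1 + 1 : ℕ) : K) ≠ 0 ∧ ((a + r + 1)! : K) ≠ 0 := by
      rwa [← mul_ne_zero_iff, ← cast_mul, ← factorial_succ]
    have hF' : ((a + 1 + r + 1)! : K) ≠ 0 := by
      rw [add_right_comm a 1 r, factorial_succ, cast_mul]
      exact mul_ne_zero hd hF
    have hshift (k : ℕ) : (a : K) + ↑(k + 1) + 1 = ↑(a + 1) + k + 1 := by push_cast; ring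
    simp only [div_eq_mul_inv] at ih ⊢
    rw [sum_range_succ_alternating_choose_succ]
    simp_rw [mul_sub, sum_sub_distrib, hshift, ih a hF, ih (a + 1) hF', add_right_comm a 1 r,
      factorial_succ (a + r + 1)]
    push_cast [factorial_succ] at hd ⊢
    field_simp
    ring

theorem sum_alternating_choose_mul_choose_add_div (m : ℕ) (h : ((2 * m + 1)! : K) ≠ 0) :
    ∑ k ∈ range (m + 1), (-1) ^ k * (m.choose k * (m + k).choose m : K) / (m + k + 1) =
      (-1) ^ m * m ! ^ 2 / (2 * m + 1)! := by
  calc _ = ∑ k ∈ range (m + 1), ∑ j ∈ range (m + 1),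
          (m.choose k * k.choose j : K) * (m.choose j * ((-1) ^ k / (m + k + 1))) := by
        refine sum_congr rfl fun k _ => ?_
        rw [choose_add_left_eq_sum]
        push_cast
        rw [mul_sum, mul_sum, sum_div]
        exact sum_congr rfl fun j _ => by ring
    _ = ∑ j ∈ range (m + 1), (m.choose j : K) ^ 2 * ((-1) ^ j *
          ∑ t ∈ range (m - j + 1), (-1) ^ t * ((m - j).choose t : K) / ((m + j : ℕ) + t + 1)) := by
        rw [sum_comm]
        refine sum_congr rfl fun j hj => ?_
        rw [sum_choose_mul_choose_mul (mem_range_succ_iff.1 hj), mul_sum, mul_sum, mul_sum]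
        refine sum_congr rfl fun t _ => ?_
        push_cast
        ring
    _ = ∑ j ∈ range (m + 1), (-1) ^ j * (m.choose j * (m + j).choose m : K) *
          (m ! ^ 2 / (2 * m + 1)!) := by
        refine sum_congr rfl fun j hj => ?_
        have hjm := mem_range_succ_iff.1 hj
        have hsum : m + j + (m - j) + 1 = 2 * m + 1 := by omega
        rw [sum_alternating_choose_div _ _ (by rwa [hsum]), hsum]
        have key := congrArg (Nat.cast : ℕ → K) (choose_sq_mul_factorial_mul_factorial hjm)
        push_cast at key
        linear_combination ((-1) ^ j / ((2 * m + 1)! : K)) * key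
    _ = _ := by
        have := congrArg (Int.cast : ℤ → K) (sum_alternating_choose_mul_choose_add m)
        push_cast at this
        rw [← sum_mul, this, mul_div_assoc]

end Field

namespace ZMod

variable {p : ℕ} [Fact p.Prime]

theorem natCast_factorial_ne_zero {n : ℕ} (hn : n < p) : (n ! : ZMod p) ≠ 0 :=
  ((IsUnit.natCast_factorial_iff_of_charP p).2 hn).ne_zero

theorem natCast_choose_sub_one {k : ℕ} (hk : k < p) :
    ((p - 1).choose k : ZMod p) = (-1) ^ k := by
  have h := cast_descFactorial (p := p) hk.le
  rw [descFactorial_eq_factorial_mul_choose, Nat.cast_mul, mul_comm] at h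
  exact mul_right_cancel₀ (natCast_factorial_ne_zero hk) h

theorem natCast_factorial_mul_factorial_sub {k : ℕ} (hk : k < p) :
    (k ! * (p - 1 - k)! : ZMod p) = (-1) ^ (k + 1) := by
  have h := congrArg (Nat.cast : ℕ → ZMod p) (choose_mul_factorial_mul_factorial (n := p - 1)
    (k := k) (by omega))
  push_cast at h
  rw [wilsons_lemma, natCast_choose_sub_one hk] at h
  have hsq : ((-1 : ZMod p) ^ k) ^ 2 = 1 := by rw [← pow_mul, mul_comm, pow_mul]; norm_num
  linear_combination (-1) ^ k * h - (k ! * (p - 1 - k)! : ZMod p) * hsq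

theorem natCast_choose_succ_div {j : ℕ} (hj : j + 1 < p) :
    ((p.choose (j + 1) / p : ℕ) : ZMod p) = (-1) ^ j / (j + 1) := by
  have hp := Fact.out (p := p.Prime)
  have key : p.choose (j + 1) / p * (j + 1) = (p - 1).choose j := by
    apply Nat.eq_of_mul_eq_mul_left hp.pos
    have h := add_one_mul_choose_eq (p - 1) j
    rw [Nat.sub_add_cancel hp.one_le] at h
    rw [← mul_assoc, Nat.mul_div_cancel' (hp.dvd_choose_self j.succ_ne_zero hj), h]
  have hne : ((j + 1 : ℕ) : ZMod p) ≠ 0 := by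
    rw [Ne, natCast_eq_zero_iff]
    exact Nat.not_dvd_of_pos_of_lt j.succ_pos hj
  rw [eq_div_iff (by exact_mod_cast hne), ← natCast_choose_sub_one (by omega), ← key]
  push_cast
  ring

theorem natCast_sum_choose_prime_div_eq_zero {m r : ℕ} (hp : p = 2 * m + r + 2) :
    ((∑ k ∈ range (m + 1), m.choose k * (m + k).choose m * (p.choose (m + k + 1) / p) +
      ∑ k ∈ range (r + 1), r.choose k * (p.choose (m + k + 1) / p) : ℕ) : ZMod p) = 0 := by
  have hv : ∀ k ≤ m + r, ((p.choose (m + k + 1) / p : ℕ) : ZMod p) =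
      (-1) ^ m * ((-1) ^ k / (m + k + 1)) := by
    intro k hk
    rw [natCast_choose_succ_div (by omega)]
    push_cast
    ring
  have hK : ∑ k ∈ range (m + 1), (m.choose k * (m + k).choose m : ZMod p) *
      (p.choose (m + k + 1) / p : ℕ) = (-1) ^ m * ((-1) ^ m * m ! ^ 2 / (2 * m + 1)!) := by
    rw [← sum_alternating_choose_mul_choose_add_div m (natCast_factorial_ne_zero (by omega)),
      mul_sum]
    refine sum_congr rfl fun k hk => ?_
    rw [hv k (by have := mem_range.1 hk; omega)]
    ring
  have hB : ∑ k ∈ range (r + 1), (r.choose k : ZMod p) * (p.choose (m + k + 1) / p : ℕ) =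
      (-1) ^ m * (r ! * m ! / (m + r + 1)!) := by
    rw [← sum_alternating_choose_div r m (natCast_factorial_ne_zero (by omega)), mul_sum]
    refine sum_congr rfl fun k hk => ?_
    rw [hv k (by have := mem_range.1 hk; omega)]
    ring
  push_cast
  rw [hK, hB]
  have w1 := natCast_factorial_mul_factorial_sub (p := p) (k := m) (by omega)
  have w2 := natCast_factorial_mul_factorial_sub (p := p) (k := 2 * m + 1) (by omega)
  rw [show p - 1 - m = m + r + 1 by omega] at w1
  rw [show p - 1 - (2 * m + 1) = r by omega] at w2
  have h1 := natCast_factorial_ne_zero (p := p) (n := 2 * m + 1) (by omega)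
  have h2 := natCast_factorial_ne_zero (p := p) (n := m + r + 1) (by omega)
  field_simp
  linear_combination ((-1) ^ m * m ! * (-1) ^ m : ZMod p) * w1 + ((-1) ^ m * m ! : ZMod p) * w2

end ZMod

theorem Nat.Prime.sq_dvd_sum_mul_choose {p m r : ℕ} (hp : p.Prime) (hpmr : p = 2 * m + r + 2) :
    p ^ 2 ∣ ∑ k ∈ range (m + 1), m.choose k * (m + k).choose m * p.choose (m + k + 1) +
      ∑ k ∈ range (r + 1), r.choose k * p.choose (m + k + 1) := by
  have := Fact.mk hp
  have hv : ∀ k ≤ m + r, p * (p.choose (m + k + 1) / p) = p.choose (m + k + 1) := fun k hk =>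
    Nat.mul_div_cancel' (hp.dvd_choose_self (by omega) (by omega))
  have hfactor : ∑ k ∈ range (m + 1), m.choose k * (m + k).choose m * p.choose (m + k + 1) +
      ∑ k ∈ range (r + 1), r.choose k * p.choose (m + k + 1) =
      p * (∑ k ∈ range (m + 1), m.choose k * (m + k).choose m * (p.choose (m + k + 1) / p) +
        ∑ k ∈ range (r + 1), r.choose k * (p.choose (m + k + 1) / p)) := by
    rw [mul_add, mul_sum, mul_sum]
    congr 1 <;> refine sum_congr rfl fun k hk => ?_ <;>
      rw [mul_left_comm, hv k (by have := mem_range.1 hk; omega)]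
  rw [hfactor, sq]
  exact mul_dvd_mul_left p
    ((ZMod.natCast_eq_zero_iff _ p).1 (ZMod.natCast_sum_choose_prime_div_eq_zero hpmr))

theorem stmt_14_general (p : ℕ) (hp : p.Prime)
    (c : ℕ) (hc1 : (p - 1) / 2 < c) (hc2 : c ≤ p - 1) :
    ((p : ℤ)^2) ∣
      (∑ a ∈ Finset.range (c + 1), ((p - 1 - a).choose (c - a) : ℤ)^2) +
        ((2 * c).choose c : ℤ) := by
  obtain ⟨m, r, rfl, hpmr⟩ : ∃ m r, c = m + r + 1 ∧ p = 2 * m + r + 2 :=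
    ⟨p - 1 - c, 2 * c - p, by omega, by omega⟩
  have hsq : ∑ a ∈ range (m + r + 1 + 1), (p - 1 - a).choose (m + r + 1 - a) ^ 2 =
      ∑ k ∈ range (m + 1), m.choose k * (m + k).choose m * p.choose (m + k + 1) := by
    rw [sum_range_sub_choose_sub_sq hc2, Nat.sub_add_cancel hp.one_le,
      show p - 1 - (m + r + 1) = m by omega, sum_range_choose_sq_eq_sum]
  have hcentral : (2 * (m + r + 1)).choose (m + r + 1) =
      ∑ k ∈ range (r + 1), r.choose k * p.choose (m + k + 1) := by
    rw [show 2 * (m + r + 1) = p + r by omega, show m + r + 1 = m + 1 + r by omega,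
      add_choose_add_eq_sum]
    simp_rw [add_right_comm m 1]
  have key := hp.sq_dvd_sum_mul_choose hpmr
  rw [← hsq, ← hcentral] at key
  exact_mod_cast key

theorem stmt_14 (p : ℕ) (hp : p.Prime) (hp2 : 2 < p)
    (c : ℕ) (hc1 : (p - 1) / 2 < c) (hc2 : c ≤ p - 1) :
    ((p : ℤ)^2) ∣
      (∑ a ∈ Finset.range (c + 1), ((p - 1 - a).choose (c - a) : ℤ)^2) +
        ((2 * c).choose c : ℤ) :=
  stmt_14_general p hp c hc1 hc2
end

section
/- Let p > 2 be a prime, set p' = (p-1)/2, and let b be an integer with 0 ≤ b ≤ p'. Then the sum over a from b to p-1 of C(a, b)^2 * (H_a - H_{a-b}) is congruent to 0 modulo p (as rational numbers, i.e., its p-adic valuation is at least 1). -/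
open Finset

private lemma choose_flip {p a b : ℕ} (hp : p.Prime) (hba : b ≤ a) (ha : a ≤ p - 1) :
    (((p - 1 + b - a).choose b : ℕ) : ZMod p) ^ 2 = ((a.choose b : ℕ) : ZMod p) ^ 2 := by
  haveI : Fact p.Prime := ⟨hp⟩
  have hp1 : 1 ≤ p := hp.one_lt.le
  have hbfac : ((Nat.factorial b : ℕ) : ZMod p) ≠ 0 := by
    rw [Ne, ZMod.natCast_eq_zero_iff, Nat.Prime.dvd_factorial hp]
    omega
  have key : ((((p - 1 + b - a).descFactorial b : ℕ)) : ZMod p)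
      = (-1) ^ b * ((a.descFactorial b : ℕ) : ZMod p) := by
    rw [Nat.descFactorial_eq_prod_range, Nat.descFactorial_eq_prod_range]
    push_cast [Nat.cast_prod]
    rw [← Finset.prod_range_reflect (fun i => ((a - i : ℕ) : ZMod p)) b]
    rw [show ((-1 : ZMod p)) ^ b = ∏ _i ∈ Finset.range b, (-1 : ZMod p) by simp,
      ← Finset.prod_mul_distrib]
    refine Finset.prod_congr rfl ?_
    intro i hi
    rw [Finset.mem_range] at hi
    have h : (p - 1 + b - a - i) + (a - (b - 1 - i)) = p := by omega
    have h2 : ((p - 1 + b - a - i : ℕ) : ZMod p) + ((a - (b - 1 - i) : ℕ) : ZMod p) = 0 := by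
      rw [← Nat.cast_add, h, ZMod.natCast_self]
    have := eq_neg_of_add_eq_zero_left h2
    rw [this]; ring
  have hdf : ∀ n : ℕ, ((n.descFactorial b : ℕ) : ZMod p)
      = ((Nat.factorial b : ℕ) : ZMod p) * ((n.choose b : ℕ) : ZMod p) := by
    intro n
    rw [Nat.descFactorial_eq_factorial_mul_choose]; push_cast; ring
  rw [hdf, hdf] at key
  have hsq := congrArg (· ^ 2) key
  simp only [mul_pow, ← pow_mul] at hsq
  have hneg : ((-1 : ZMod p) ^ (b * 2)) = 1 := by
    rw [mul_comm, pow_mul]; norm_num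
  rw [hneg, one_mul] at hsq
  exact mul_left_cancel₀ (pow_ne_zero 2 hbfac) hsq

private lemma inner_flip {p a b : ℕ} (hp : p.Prime) (hp2 : 2 < p) (hba : b ≤ a)
    (ha : a ≤ p - 1) :
    ∑ j ∈ Ico (p - 1 - a) (p - 1 + b - a), (((j : ZMod p)) + 1)⁻¹
      = - ∑ j ∈ Ico (a - b) a, (((j : ZMod p)) + 1)⁻¹ := by
  haveI : Fact p.Prime := ⟨hp⟩
  rw [← Finset.sum_neg_distrib]
  refine (Finset.sum_nbij' (fun j => p - 2 - j) (fun j => p - 2 - j) ?_ ?_ ?_ ?_ ?_).symm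
  · intro j hj; rw [Finset.mem_Ico] at *; omega
  · intro j hj; rw [Finset.mem_Ico] at *; omega
  · intro j hj; rw [Finset.mem_Ico] at hj; omega
  · intro j hj; rw [Finset.mem_Ico] at hj; omega
  · intro j hj
    rw [Finset.mem_Ico] at hj
    have h : ((p - 2 - j) + 1) + (j + 1) = p := by omega
    have h2 : (((p - 2 - j : ℕ) : ZMod p) + 1) + (((j : ℕ) : ZMod p) + 1) = 0 := by
      have := congrArg (Nat.cast : ℕ → ZMod p) h
      push_cast [ZMod.natCast_self] at this ⊢
      linear_combination this
    rw [eq_neg_of_add_eq_zero_left h2, inv_neg]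

private lemma U_zero {p b : ℕ} (hp : p.Prime) (hp2 : 2 < p) (hb : b ≤ (p - 1) / 2) :
    ∑ a ∈ Icc b (p - 1), ((a.choose b : ℕ) : ZMod p) ^ 2 *
        ∑ j ∈ Ico (a - b) a, (((j : ZMod p)) + 1)⁻¹ = 0 := by
  haveI : Fact p.Prime := ⟨hp⟩
  set f : ℕ → ZMod p := fun a => ((a.choose b : ℕ) : ZMod p) ^ 2 *
      ∑ j ∈ Ico (a - b) a, (((j : ZMod p)) + 1)⁻¹ with hf
  have hflip : ∑ a ∈ Icc b (p - 1), f a = ∑ a ∈ Icc b (p - 1), (-(f a)) := by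
    refine Finset.sum_nbij' (fun a => p - 1 + b - a) (fun a => p - 1 + b - a) ?_ ?_ ?_ ?_ ?_
    · intro a ha; rw [Finset.mem_Icc] at *; omega
    · intro a ha; rw [Finset.mem_Icc] at *; omega
    · intro a ha; rw [Finset.mem_Icc] at ha; omega
    · intro a ha; rw [Finset.mem_Icc] at ha; omega
    · intro a ha
      rw [Finset.mem_Icc] at ha
      have h1 : (p - 1 + b - a) - b = p - 1 - a := by omega
      simp only [hf]
      rw [h1, inner_flip hp hp2 ha.1 ha.2, choose_flip hp ha.1 ha.2]
      ring
  rw [Finset.sum_neg_distrib] at hflip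
  have h2 : (2 : ZMod p) * ∑ a ∈ Icc b (p - 1), f a = 0 := by
    rw [two_mul]
    linear_combination hflip
  have h2ne : (2 : ZMod p) ≠ 0 := by
    have : ((2 : ℕ) : ZMod p) ≠ 0 := by
      rw [Ne, ZMod.natCast_eq_zero_iff]
      intro hdvd
      have := Nat.le_of_dvd (by norm_num) hdvd
      omega
    simpa using this
  exact (mul_eq_zero.mp h2).resolve_left h2ne

theorem stmt_17 (p : ℕ) (hp : p.Prime) (hp2 : 2 < p)
    (b : ℕ) (hb : b ≤ (p - 1) / 2) :
    padicNorm p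
        (∑ a ∈ Finset.Icc b (p - 1), (a.choose b : ℚ)^2 * (H a - H (a - b))) ≤
      ((p : ℚ))⁻¹ := by
  haveI : Fact p.Prime := ⟨hp⟩
  set N : ℕ := Nat.factorial (p - 1) with hN
  set S : ℚ := ∑ a ∈ Finset.Icc b (p - 1), (a.choose b : ℚ)^2 * (H a - H (a - b)) with hS
  set T : ℕ := ∑ a ∈ Finset.Icc b (p - 1),
      (a.choose b) ^ 2 * ∑ j ∈ Ico (a - b) a, (N / (j + 1)) with hT
  -- rewrite S's inner difference as a sum over Ico
  have hHdiff : ∀ a ∈ Finset.Icc b (p - 1), H a - H (a - b)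
      = ∑ j ∈ Ico (a - b) a, (1 / ((j : ℚ) + 1)) := by
    intro a ha
    rw [Finset.mem_Icc] at ha
    have hsplit := Finset.sum_Ico_consecutive (fun j => (1 : ℚ) / ((j : ℚ) + 1))
      (Nat.zero_le (a - b)) (Nat.sub_le a b)
    simp only [H, ← Finset.range_eq_Ico] at hsplit ⊢
    rw [← hsplit, Finset.range_eq_Ico]
    ring
  have hdvd : ∀ a ∈ Finset.Icc b (p - 1), ∀ j ∈ Ico (a - b) a, (j + 1) ∣ N := by
    intro a ha j hj
    rw [Finset.mem_Icc] at ha; rw [Finset.mem_Ico] at hj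
    exact Nat.dvd_factorial (Nat.succ_pos j) (by omega)
  have hTS : (T : ℚ) = N * S := by
    rw [hT, hS]
    push_cast
    rw [Finset.mul_sum]
    refine Finset.sum_congr rfl ?_
    intro a ha
    rw [hHdiff a ha]
    have hterm : ∀ j ∈ Ico (a - b) a, ((N / (j + 1) : ℕ) : ℚ)
        = (N : ℚ) * (1 / ((j : ℚ) + 1)) := by
      intro j hj
      have hd := hdvd a ha j hj
      rw [Nat.cast_div hd (by positivity)]
      push_cast
      ring
    rw [Finset.sum_congr rfl hterm, ← Finset.mul_sum]
    ring
  -- p divides T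
  have hpT : p ∣ T := by
    rw [← ZMod.natCast_eq_zero_iff]
    rw [hT]
    push_cast
    have : ∀ a ∈ Finset.Icc b (p - 1),
        ((a.choose b : ℕ) : ZMod p) ^ 2 * ∑ j ∈ Ico (a - b) a, (((N / (j + 1) : ℕ)) : ZMod p)
          = (N : ZMod p) * (((a.choose b : ℕ) : ZMod p) ^ 2 *
              ∑ j ∈ Ico (a - b) a, (((j : ZMod p)) + 1)⁻¹) := by
      intro a ha
      have : ∑ j ∈ Ico (a - b) a, (((N / (j + 1) : ℕ)) : ZMod p)
          = ∑ j ∈ Ico (a - b) a, (N : ZMod p) * (((j : ZMod p)) + 1)⁻¹ := by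
        refine Finset.sum_congr rfl ?_
        intro j hj
        have hd := hdvd a ha j hj
        have hj1 : (((j : ZMod p)) + 1) ≠ 0 := by
          rw [Finset.mem_Ico] at hj; rw [Finset.mem_Icc] at ha
          have : ((j + 1 : ℕ) : ZMod p) ≠ 0 := by
            rw [Ne, ZMod.natCast_eq_zero_iff]
            intro hdvd2
            have := Nat.le_of_dvd (Nat.succ_pos j) hdvd2
            omega
          simpa using this
        rw [eq_mul_inv_iff_mul_eq₀ hj1,
          show ((j : ZMod p) + 1) = (((j + 1 : ℕ)) : ZMod p) by push_cast; ring,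
          ← Nat.cast_mul, Nat.div_mul_cancel hd]
      rw [this, ← Finset.mul_sum]
      ring
    rw [Finset.sum_congr rfl this, ← Finset.mul_sum, U_zero hp hp2 hb, mul_zero]
  -- N is a unit mod p
  have hNnorm : padicNorm p (N : ℚ) = 1 := by
    rw [padicNorm.nat_eq_one_iff]
    rw [hN, hp.dvd_factorial]
    omega
  have hNne : (N : ℚ) ≠ 0 := by
    have : 0 < N := Nat.factorial_pos _
    positivity
  have hSval : S = (T : ℚ) / (N : ℚ) := by
    rw [hTS]; field_simp
  rw [hSval, padicNorm.div, hNnorm, div_one]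
  have hTnorm : padicNorm p ((T : ℤ) : ℚ) ≤ (p : ℚ) ^ (-(1 : ℕ) : ℤ) := by
    rw [← padicNorm.dvd_iff_norm_le, pow_one]
    exact_mod_cast hpT
  simpa using hTnorm
end

section
/- Let p > 2 be a prime. Then the sum over all pairs (m1, m2) of nonnegative integers with m1+m2 < p of C(m1+m2, m1)^2 * (H_{m1+m2} - H_{m1}) is congruent to 0 modulo p (as rational numbers, i.e., its p-adic valuation is at least 1). -/
lemma desc_cong (p k m : ℕ) [NeZero p] (h : k + m ≤ p - 1) :
    (((p - 1 - k).descFactorial m : ℕ) : ZMod p) = (-1)^m * ((k + m).descFactorial m) := by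
  induction m with
  | zero => simp
  | succ m ih =>
    have hp : 1 ≤ p := Nat.one_le_iff_ne_zero.2 (NeZero.ne p)
    have h' : k + m ≤ p - 1 := by omega
    rw [Nat.descFactorial_succ, show k + (m+1) = (k+m) + 1 from rfl,
      Nat.succ_descFactorial_succ]
    push_cast
    rw [ih h']
    have : ((p - 1 - k - m : ℕ) : ZMod p) = -((k:ZMod p) + m + 1) := by
      have : (p - 1 - k - m) + (k + m + 1) = p := by omega
      have := congrArg (Nat.cast : ℕ → ZMod p) this
      push_cast at this
      rw [ZMod.natCast_self] at this
      linear_combination this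
    rw [this]
    ring

lemma choose_cong (p k m : ℕ) (hp : p.Prime) (h : k + m ≤ p - 1) :
    (((p - 1 - k).choose m : ℕ) : ZMod p) = (-1)^m * ((k + m).choose m) := by
  haveI : Fact p.Prime := ⟨hp⟩
  have h1 := desc_cong p k m h
  rw [Nat.descFactorial_eq_factorial_mul_choose, Nat.descFactorial_eq_factorial_mul_choose] at h1
  have hp2 := hp.two_le
  have hfac : ((m.factorial : ℕ) : ZMod p) ≠ 0 := by
    rw [Ne, ZMod.natCast_eq_zero_iff]
    intro hd
    have := (Nat.Prime.dvd_factorial hp).1 hd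
    omega
  refine mul_right_cancel₀ hfac ?_
  push_cast at h1 ⊢
  linear_combination h1

lemma choose_sq_cong (p k m : ℕ) (hp : p.Prime) (h : k + m ≤ p - 1) :
    ((((p - 1 - k).choose m : ℕ) : ZMod p))^2 = (((k + m).choose m : ℕ) : ZMod p)^2 := by
  rw [choose_cong p k m hp h, mul_pow, ← pow_mul, mul_comm m 2, pow_mul]
  simp

def Bc (p j : ℕ) : ℕ :=
  ∑ m1 ∈ Finset.range p, ∑ m2 ∈ Finset.range p,
    if m1 + m2 < p ∧ m1 ≤ j ∧ j < m1 + m2 then ((m1 + m2).choose m1)^2 else 0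

lemma Bc_symm (p j : ℕ) (hp : p.Prime) (hj : j < p - 1) :
    ((Bc p j : ℕ) : ZMod p) = ((Bc p (p - 2 - j) : ℕ) : ZMod p) := by
  unfold Bc
  push_cast
  rw [← Finset.sum_product', ← Finset.sum_product']
  rw [← Finset.sum_filter, ← Finset.sum_filter]
  refine Finset.sum_nbij' (fun x => (p - 1 - x.2 - x.1, x.2)) (fun x => (p - 1 - x.2 - x.1, x.2))
    ?_ ?_ ?_ ?_ ?_
  · rintro ⟨m1, m2⟩ hx
    simp only [Finset.mem_filter, Finset.mem_product, Finset.mem_range] at hx ⊢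
    omega
  · rintro ⟨m1, m2⟩ hx
    simp only [Finset.mem_filter, Finset.mem_product, Finset.mem_range] at hx ⊢
    omega
  · rintro ⟨m1, m2⟩ hx
    simp only [Finset.mem_filter, Finset.mem_product, Finset.mem_range] at hx
    simp only [Prod.mk.injEq]
    exact ⟨by omega, trivial⟩
  · rintro ⟨m1, m2⟩ hx
    simp only [Finset.mem_filter, Finset.mem_product, Finset.mem_range] at hx
    simp only [Prod.mk.injEq]
    exact ⟨by omega, trivial⟩
  · rintro ⟨m1, m2⟩ hx
    simp only [Finset.mem_filter, Finset.mem_product, Finset.mem_range] at hx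
    simp only
    have h1 : p - 1 - m2 - m1 + m2 = p - 1 - m1 := by omega
    have h2 : (p - 1 - m1) - m2 = p - 1 - m2 - m1 := by omega
    have h3 : m2 ≤ p - 1 - m1 := by omega
    rw [h1, ← h2, Nat.choose_symm h3]
    have h6 : (m1 + m2).choose m1 = (m1 + m2).choose m2 := by
      have h5 : m2 ≤ m1 + m2 := by omega
      rw [← Nat.choose_symm h5]
      congr 1
      omega
    rw [h6]
    exact (choose_sq_cong p m1 m2 hp (by omega)).symm

lemma Bc_dvd (p j : ℕ) (hp : p.Prime) (hj : j < p - 1) :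
    p ∣ Bc p j * (p - 1 - j) + Bc p (p - 2 - j) * (j + 1) := by
  haveI : NeZero p := ⟨hp.ne_zero⟩
  rw [← ZMod.natCast_eq_zero_iff]
  push_cast
  rw [← Bc_symm p j hp hj]
  have h1 : ((p - 1 - j : ℕ) : ZMod p) = -((j : ZMod p) + 1) := by
    have e : (p - 1 - j) + (j + 1) = p := by omega
    have e2 := congrArg (Nat.cast : ℕ → ZMod p) e
    push_cast at e2
    rw [ZMod.natCast_self] at e2
    linear_combination e2
  rw [h1]
  ring

lemma term_norm (p j : ℕ) (hp : p.Prime) (hj : j < p - 1) :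
    padicNorm p ((Bc p j : ℚ)/((j:ℚ)+1) + (Bc p (p-2-j) : ℚ)/((p-1-j : ℕ) : ℚ)) ≤ (p:ℚ)⁻¹ := by
  haveI : Fact p.Prime := ⟨hp⟩
  have hple := hp.two_le
  have hd1 : ((j:ℚ)+1) ≠ 0 := by positivity
  have hd2 : ((p-1-j : ℕ) : ℚ) ≠ 0 := by
    have : 0 < p-1-j := by omega
    exact_mod_cast this.ne'
  have key : (Bc p j : ℚ)/((j:ℚ)+1) + (Bc p (p-2-j) : ℚ)/((p-1-j : ℕ) : ℚ)
      = ((Bc p j * (p-1-j) + Bc p (p-2-j) * (j+1) : ℕ) : ℚ) / (((j+1) * (p-1-j) : ℕ) : ℚ) := by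
    push_cast
    field_simp
  rw [key, padicNorm.div]
  have hden : padicNorm p ((((j+1) * (p-1-j) : ℕ)) : ℚ) = 1 := by
    rw [padicNorm.nat_eq_one_iff]
    intro hdvd
    rcases hp.dvd_mul.1 hdvd with h | h
    · exact absurd (Nat.le_of_dvd (by omega) h) (by omega)
    · exact absurd (Nat.le_of_dvd (by omega) h) (by omega)
  rw [hden, div_one]
  have hdvd := Bc_dvd p j hp hj
  have h2 : ((p^1 : ℕ) : ℤ) ∣ ((Bc p j * (p-1-j) + Bc p (p-2-j) * (j+1) : ℕ) : ℤ) := by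
    push_cast
    exact_mod_cast Int.natCast_dvd_natCast.2 (by simpa using hdvd)
  have h3 := padicNorm.dvd_iff_norm_le.1 h2
  rw [show ((-(1:ℕ) : ℤ)) = (-1 : ℤ) by norm_num] at h3
  simpa using h3

lemma S_eq (p : ℕ) :
    (∑ m1 ∈ Finset.range p, ∑ m2 ∈ Finset.range p,
      if m1 + m2 < p then ((m1 + m2).choose m1 : ℚ)^2 * (H (m1 + m2) - H m1) else 0)
    = ∑ j ∈ Finset.range (p-1), (Bc p j : ℚ)/((j:ℚ)+1) := by
  have step : ∀ m1 ∈ Finset.range p, ∀ m2 ∈ Finset.range p,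
      (if m1 + m2 < p then ((m1 + m2).choose m1 : ℚ)^2 * (H (m1 + m2) - H m1) else 0)
      = ∑ j ∈ Finset.range (p-1),
          (if m1 + m2 < p ∧ m1 ≤ j ∧ j < m1 + m2
            then ((m1 + m2).choose m1 : ℚ)^2 * (1/((j:ℚ)+1)) else 0) := by
    intro m1 hm1 m2 hm2
    simp only [Finset.mem_range] at hm1 hm2
    by_cases h : m1 + m2 < p
    · simp only [h, if_true, true_and]
      have hHm : H (m1+m2) - H m1 = ∑ j ∈ Finset.Ico m1 (m1+m2), 1/((j:ℚ)+1) := by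
        rw [H, H, Finset.sum_Ico_eq_sub _ (Nat.le_add_right m1 m2)]
      rw [hHm, Finset.mul_sum, ← Finset.sum_filter]
      apply Finset.sum_congr
      · ext a
        simp only [Finset.mem_Ico, Finset.mem_filter, Finset.mem_range]
        omega
      · intro x _
        rw [mul_one_div]
    · simp [h]
  rw [Finset.sum_congr rfl (fun m1 hm1 => Finset.sum_congr rfl (step m1 hm1))]
  rw [Finset.sum_congr rfl (fun m1 _ => Finset.sum_comm), Finset.sum_comm]
  apply Finset.sum_congr rfl
  intro j _
  unfold Bc
  push_cast
  rw [Finset.sum_div]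
  refine Finset.sum_congr rfl fun m1 _ => ?_
  rw [Finset.sum_div]
  refine Finset.sum_congr rfl fun m2 _ => ?_
  by_cases hc : m1 + m2 < p ∧ m1 ≤ j ∧ j < m1 + m2
  · simp [hc, mul_one_div, div_eq_mul_inv]
  · simp [hc]

theorem stmt_19 (p : ℕ) (hp : p.Prime) (hp2 : 2 < p) :
    padicNorm p
        (∑ m1 ∈ Finset.range p, ∑ m2 ∈ Finset.range p,
          if m1 + m2 < p then
            ((m1 + m2).choose m1 : ℚ)^2 * (H (m1 + m2) - H m1)
          else 0) ≤ ((p : ℚ))⁻¹ := by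
  haveI : Fact p.Prime := ⟨hp⟩
  rw [S_eq p]
  have hrev : ∑ j ∈ Finset.range (p-1), (Bc p (p-2-j) : ℚ)/((p-1-j : ℕ):ℚ)
      = ∑ j ∈ Finset.range (p-1), (Bc p j : ℚ)/((j:ℚ)+1) := by
    rw [← Finset.sum_range_reflect (fun j => (Bc p (p-2-j) : ℚ)/((p-1-j : ℕ):ℚ)) (p-1)]
    apply Finset.sum_congr rfl
    intro j hj
    simp only [Finset.mem_range] at hj
    have e1 : p - 2 - (p - 1 - 1 - j) = j := by omega
    have e2 : p - 1 - (p - 1 - 1 - j) = j + 1 := by omega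
    rw [e1, e2]
    push_cast
    ring
  have h2S : (2:ℚ) * (∑ j ∈ Finset.range (p-1), (Bc p j : ℚ)/((j:ℚ)+1))
      = ∑ j ∈ Finset.range (p-1),
          ((Bc p j : ℚ)/((j:ℚ)+1) + (Bc p (p-2-j) : ℚ)/((p-1-j : ℕ):ℚ)) := by
    rw [Finset.sum_add_distrib, two_mul, hrev]
  have hnorm2 : padicNorm p ((2:ℚ) * (∑ j ∈ Finset.range (p-1), (Bc p j : ℚ)/((j:ℚ)+1)))
      ≤ (p:ℚ)⁻¹ := by
    rw [h2S]
    refine padicNorm.sum_le' (fun j hj => term_norm p j hp (Finset.mem_range.1 hj)) ?_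
    positivity
  rw [padicNorm.mul] at hnorm2
  have h2 : padicNorm p (2:ℚ) = 1 := by
    rw [show (2:ℚ) = ((2:ℕ):ℚ) by norm_num, padicNorm.nat_eq_one_iff]
    intro hd
    exact absurd (Nat.le_of_dvd (by norm_num) hd) (by omega)
  rw [h2, one_mul] at hnorm2
  exact hnorm2
end
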